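/- arXiv:1312.0534 — 7 statements merged into one kernel-verified Lean document; each statement's English description precedes it below -/
import Mathlib

section
/- Let X be a real Hilbert space, let C be a nonempty closed convex subset of X, let β ≥ 0, and set D := C_{[β]}. Then for every x ∈ X: if d_C(x) ≤ β then P_D x = x, and otherwise P_D x = P_C x + β·(x − P_C x)/d_C(x). -/
/-!
The enlargement `D` is the closed thickening of `C`, hence convex, and in a Hilbert space a
point has at most one nearest point in a convex set. Outside `D`, the distance to `D` is
`d_C(x) - β`, and the point at distance `β` from `P_C x` on the segment `[P_C x, x]` lies in `D`
at exactly that distance from `x`, so it is `P_D x`.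
-/

open Metric

theorem Metric.mem_cthickening_iff_infDist_le {α : Type*} [PseudoMetricSpace α] {s : Set α}
    {δ : ℝ} {x : α} (hs : s.Nonempty) (hδ : 0 ≤ δ) :
    x ∈ cthickening δ s ↔ infDist x s ≤ δ := by
  rw [mem_cthickening_iff, ENNReal.le_ofReal_iff_toReal_le (infEDist_ne_top hs) hδ, infDist]

theorem Metric.infDist_cthickening_of_le {E : Type*} [SeminormedAddCommGroup E]
    [NormedSpace ℝ E] {s : Set E} {δ : ℝ} {x : E} (hs : s.Nonempty) (hδ : 0 ≤ δ)
    (hx : δ ≤ infDist x s) :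
    infDist x (cthickening δ s) = infDist x s - δ := by
  have hofReal : ENNReal.ofReal δ ≤ infEDist x s :=
    (ENNReal.ofReal_le_iff_le_toReal (infEDist_ne_top hs)).2 hx
  rw [infDist, infEDist_cthickening, ENNReal.toReal_sub_of_le hofReal (infEDist_ne_top hs),
    ENNReal.toReal_ofReal hδ, infDist]

theorem Convex.eq_of_dist_eq_infDist {E : Type*} [NormedAddCommGroup E] [NormedSpace ℝ E]
    [StrictConvexSpace ℝ E] {s : Set E} (hs : Convex ℝ s) {x p q : E} (hp : p ∈ s) (hq : q ∈ s)
    (hpx : dist x p = infDist x s) (hqx : dist x q = infDist x s) : p = q := by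
  by_contra hne
  have hmid : ‖(1 / 2 : ℝ) • (x - p) + (1 / 2 : ℝ) • (x - q)‖ < infDist x s :=
    norm_combo_lt_of_ne (by rw [← dist_eq_norm, hpx]) (by rw [← dist_eq_norm, hqx])
      (fun h => hne (sub_right_injective h)) one_half_pos one_half_pos (by norm_num)
  have hmem : (1 / 2 : ℝ) • p + (1 / 2 : ℝ) • q ∈ s :=
    hs hp hq one_half_pos.le one_half_pos.le (by norm_num)
  have hdist : dist x ((1 / 2 : ℝ) • p + (1 / 2 : ℝ) • q) =
      ‖(1 / 2 : ℝ) • (x - p) + (1 / 2 : ℝ) • (x - q)‖ := by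
    rw [dist_eq_norm]
    congr 1
    module
  exact (infDist_le_dist_of_mem hmem).not_gt (hdist ▸ hmid)

theorem projection_onto_enlargement_general
    {X : Type*} [NormedAddCommGroup X] [InnerProductSpace ℝ X]
    (C : Set X) (hCne : C.Nonempty) (hCconv : Convex ℝ C)
    (β : ℝ) (hβ : 0 ≤ β)
    (D : Set X) (hD : D = {x : X | Metric.infDist x C ≤ β})
    (PC : X → X) (hPC : ∀ x : X, PC x ∈ C ∧ dist x (PC x) = Metric.infDist x C)
    (PD : X → X) (hPD : ∀ x : X, PD x ∈ D ∧ dist x (PD x) = Metric.infDist x D) :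
    ∀ x : X,
      (Metric.infDist x C ≤ β → PD x = x) ∧
      (β < Metric.infDist x C →
        PD x = PC x + (β / Metric.infDist x C) • (x - PC x)) := by
  have hDeq : D = cthickening β C := by
    ext y
    rw [hD, Set.mem_ofPred_eq, mem_cthickening_iff_infDist_le hCne hβ]
  intro x
  refine ⟨fun hx => ?_, fun hx => ?_⟩
  · have hxD : x ∈ D := hD ▸ hx
    exact (dist_eq_zero.1 ((hPD x).2.trans (infDist_zero_of_mem hxD))).symm
  · obtain ⟨hPCmem, hPCdist⟩ := hPC x
    set d := infDist x C
    have hd : 0 < d := hβ.trans_lt hx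
    have hy : PC x + (β / d) • (x - PC x) = AffineMap.lineMap (PC x) x (β / d) := by
      rw [AffineMap.lineMap_apply_module', add_comm]
    have hyD : PC x + (β / d) • (x - PC x) ∈ D := by
      rw [hD, Set.mem_ofPred_eq]
      refine (infDist_le_dist_of_mem hPCmem).trans_eq ?_
      rw [hy, dist_lineMap_left, dist_comm, hPCdist, Real.norm_of_nonneg (by positivity)]
      field_simp
    have hxy : dist x (PC x + (β / d) • (x - PC x)) = d - β := by
      rw [hy, dist_comm, dist_lineMap_right, dist_comm, hPCdist,
        Real.norm_of_nonneg (sub_nonneg.2 ((div_le_one hd).2 hx.le))]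
      field_simp
    have hinfDist : infDist x D = d - β := hDeq ▸ infDist_cthickening_of_le hCne hβ hx.le
    exact (hDeq ▸ hCconv.cthickening β).eq_of_dist_eq_infDist (hPD x).1 hyD (hPD x).2
      (hxy.trans hinfDist.symm)

/-- projection onto an enlargement.
Let `X` be a real Hilbert space, `C` a nonempty closed convex subset, `β ≥ 0`,
and `D := C_[β] = {x : d_C(x) ≤ β}`.  Let `P_C` and `P_D` be the metric
projections onto `C` and `D`.  Then for every `x`: if `d_C(x) ≤ β` then
`P_D x = x`, and otherwise `P_D x = P_C x + β (x − P_C x)/d_C(x)`. -/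
theorem projection_onto_enlargement
    {X : Type*} [NormedAddCommGroup X] [InnerProductSpace ℝ X] [CompleteSpace X]
    (C : Set X) (hCne : C.Nonempty) (hCcl : IsClosed C) (hCconv : Convex ℝ C)
    (β : ℝ) (hβ : 0 ≤ β)
    (D : Set X) (hD : D = {x : X | Metric.infDist x C ≤ β})
    (PC : X → X) (hPC : ∀ x : X, PC x ∈ C ∧ dist x (PC x) = Metric.infDist x C)
    (PD : X → X) (hPD : ∀ x : X, PD x ∈ D ∧ dist x (PD x) = Metric.infDist x D) :
    ∀ x : X,
      (Metric.infDist x C ≤ β → PD x = x) ∧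
      (β < Metric.infDist x C →
        PD x = PC x + (β / Metric.infDist x C) • (x - PC x)) :=
  projection_onto_enlargement_general C hCne hCconv β hβ D hD PC hPC PD hPD
end

section
/- Let X be a real Hilbert space, let Z be a nonempty closed convex subset of X, let β > 0, set C := Z_{[β]}, and let Q be the intrepid projector onto C with respect to Z and β. Then for every x ∈ X, Qx lies on the line segment [x, P_Z x] and Qx ∈ C. -/
/-!
In each of the three regimes `Qx = P_Z x + s (x - P_Z x)` for some `s ∈ [0, 1]` with
`s · d_Z(x) ≤ β` (`s = 1`, `s = 0`, `s = 2 - d_Z(x)/β` respectively). Such a point lies on the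
segment, and its distance to `P_Z x ∈ Z` is `s · d_Z(x) ≤ β`.
-/

open AffineMap Metric Set

section LineMap

variable {E : Type*} [NormedAddCommGroup E] [NormedSpace ℝ E]

theorem infDist_lineMap_le {Z : Set E} {p : E} (hp : p ∈ Z) (x : E) {s : ℝ} (hs : 0 ≤ s) :
    infDist (lineMap p x s) Z ≤ s * dist p x :=
  (infDist_le_dist_of_mem hp).trans_eq (by rw [dist_lineMap_left, Real.norm_of_nonneg hs])

theorem add_smul_sub_eq_lineMap (p x : E) (t : ℝ) :
    x + (1 - t) • (x - p) = lineMap p x (2 - t) := by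
  rw [lineMap_apply_module]
  module

end LineMap

theorem intrepid_coeff_mem_Icc_and_mul_le {β d : ℝ} (hβ : 0 < β) (h₁ : β < d)
    (h₂ : d < 2 * β) :
    2 - d / β ∈ Icc (0 : ℝ) 1 ∧ (2 - d / β) * d ≤ β := by
  have hd : d / β * β = d := div_mul_cancel₀ d hβ.ne'
  refine ⟨⟨?_, ?_⟩, ?_⟩
  · linarith [(div_lt_iff₀ hβ).2 h₂]
  · linarith [(lt_div_iff₀ hβ).2 (by linarith : 1 * β < d)]
  · nlinarith [sq_nonneg (d - β)]

theorem intrepid_projector_segment_and_membership_general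
    {X : Type*} [NormedAddCommGroup X] [InnerProductSpace ℝ X]
    (Z : Set X)
    (β : ℝ) (hβ : 0 < β)
    (PZ : X → X) (hPZ : ∀ x : X, PZ x ∈ Z ∧ dist x (PZ x) = Metric.infDist x Z)
    (C : Set X) (hC : C = {x : X | Metric.infDist x Z ≤ β})
    (Q : X → X)
    (hQ₁ : ∀ x : X, 2 * β ≤ Metric.infDist x Z → Q x = PZ x)
    (hQ₂ : ∀ x : X, Metric.infDist x Z ≤ β → Q x = x)
    (hQ₃ : ∀ x : X, β < Metric.infDist x Z → Metric.infDist x Z < 2 * β →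
      Q x = x + (1 - Metric.infDist x Z / β) • (x - PZ x)) :
    ∀ x : X, Q x ∈ segment ℝ x (PZ x) ∧ Q x ∈ C := by
  intro x
  obtain ⟨hPmem, hPdist⟩ := hPZ x
  obtain ⟨s, hs, hQs, hsd⟩ :
      ∃ s ∈ Icc (0 : ℝ) 1, Q x = lineMap (PZ x) x s ∧ s * infDist x Z ≤ β := by
    rcases le_or_gt (infDist x Z) β with h₁ | h₁
    · exact ⟨1, right_mem_Icc.2 zero_le_one, by rw [hQ₂ x h₁, lineMap_apply_one], by simpa⟩
    rcases le_or_gt (2 * β) (infDist x Z) with h₂ | h₂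
    · exact ⟨0, left_mem_Icc.2 zero_le_one, by rw [hQ₁ x h₂, lineMap_apply_zero],
        by simpa using hβ.le⟩
    obtain ⟨hs, hsd⟩ := intrepid_coeff_mem_Icc_and_mul_le hβ h₁ h₂
    exact ⟨_, hs, by rw [hQ₃ x h₁ h₂, add_smul_sub_eq_lineMap], hsd⟩
  refine ⟨hQs ▸ segment_symm ℝ (PZ x) x ▸ lineMap_mem_segment ℝ (PZ x) x hs, ?_⟩
  rw [hC, hQs]
  exact calc infDist (lineMap (PZ x) x s) Z
        ≤ s * dist (PZ x) x := infDist_lineMap_le hPmem x hs.1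
    _ = s * infDist x Z := by rw [dist_comm, hPdist]
    _ ≤ β := hsd

/-- intrepid projector: range property.
Let `X` be a real Hilbert space, `Z` a nonempty closed convex subset, `β > 0`,
`C := Z_[β]`, and `Q` the intrepid projector onto `C` (w.r.t. `Z` and `β`).
Then for every `x`, `Qx` lies on the segment `[x, P_Z x]` and `Qx ∈ C`. -/
theorem intrepid_projector_segment_and_membership
    {X : Type*} [NormedAddCommGroup X] [InnerProductSpace ℝ X] [CompleteSpace X]
    (Z : Set X) (hZne : Z.Nonempty) (hZcl : IsClosed Z) (hZconv : Convex ℝ Z)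
    (β : ℝ) (hβ : 0 < β)
    (PZ : X → X) (hPZ : ∀ x : X, PZ x ∈ Z ∧ dist x (PZ x) = Metric.infDist x Z)
    (C : Set X) (hC : C = {x : X | Metric.infDist x Z ≤ β})
    (Q : X → X)
    (hQ₁ : ∀ x : X, 2 * β ≤ Metric.infDist x Z → Q x = PZ x)
    (hQ₂ : ∀ x : X, Metric.infDist x Z ≤ β → Q x = x)
    (hQ₃ : ∀ x : X, β < Metric.infDist x Z → Metric.infDist x Z < 2 * β →
      Q x = x + (1 - Metric.infDist x Z / β) • (x - PZ x)) :
    ∀ x : X, Q x ∈ segment ℝ x (PZ x) ∧ Q x ∈ C :=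
  intrepid_projector_segment_and_membership_general Z β hβ PZ hPZ C hC Q hQ₁ hQ₂ hQ₃
end

section
/- Let X be a real Hilbert space, let Z be a nonempty closed convex subset of X, let β > 0, set C := Z_{[β]}, and let Q be the intrepid projector onto C with respect to Z and β. Let α ∈ [0, β], let y ∈ Z_{[α]}, and let x ∈ X with d_Z(x) ≥ 2β. Then ‖x − y‖² − ‖Qx − y‖² ≥ 2(β−α)‖x − Qx‖, where ‖x − Qx‖ = d_Z(x) = β + d_C(x); consequently ‖x − y‖² − ‖Qx − y‖² ≥ 4β(β−α). -/
/-! If `p` is the nearest point of the convex set `Z` to `x`, the variational inequality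
`⟪x - p, z - p⟫ ≤ 0` for `z ∈ Z` gives `‖x - y‖² - ‖p - y‖² ≥ ‖x - p‖² - 2 ‖x - p‖ ‖y - z‖`;
choosing `z` nearest to `y` turns the last factor into at most `α`, and `‖x - p‖ = d_Z(x) ≥ 2β`
finishes the estimate. The identity `d_Z(x) = β + d_C(x)` follows from the triangle inequality
for `d_Z` in one direction and, in the other, from the point of the segment `[p, x]` at distance
`β` from `p`. -/

open Metric RealInnerProductSpace

section Enlargement

variable {E : Type*} [NormedAddCommGroup E] [NormedSpace ℝ E]

theorem infDist_sub_le_infDist_enlargement {α : Type*} [PseudoMetricSpace α] {Z : Set α}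
    (hZ : Z.Nonempty) {β : ℝ} (hβ : 0 ≤ β) (x : α) :
    infDist x Z - β ≤ infDist x {u | infDist u Z ≤ β} := by
  obtain ⟨z, hz⟩ := hZ
  have hne : ({u | infDist u Z ≤ β} : Set α).Nonempty :=
    ⟨z, by simpa [infDist_zero_of_mem hz] using hβ⟩
  refine (le_infDist hne).2 fun c (hc : infDist c Z ≤ β) => ?_
  linarith [infDist_le_infDist_add_dist (x := x) (y := c) (s := Z), dist_comm x c]

theorem infDist_enlargement_le {Z : Set E} {x p : E} (hp : p ∈ Z)
    (hpx : dist x p = infDist x Z) {β : ℝ} (hβ : 0 < β) (hβx : β ≤ infDist x Z) :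
    infDist x {u | infDist u Z ≤ β} ≤ infDist x Z - β := by
  set d := infDist x Z
  have hd : 0 < d := hβ.trans_le hβx
  have hxp : ‖x - p‖ = d := by rw [← dist_eq_norm, hpx]
  set w := p + (β / d) • (x - p)
  have hwp : dist w p = β := by
    rw [dist_eq_norm, add_sub_cancel_left, norm_smul, hxp, Real.norm_of_nonneg (by positivity),
      div_mul_cancel₀ _ hd.ne']
  have hxw : dist x w = d - β := by
    have : x - w = (1 - β / d) • (x - p) := by module
    rw [dist_eq_norm, this, norm_smul, hxp, Real.norm_of_nonneg, sub_mul,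
      div_mul_cancel₀ _ hd.ne', one_mul]
    rw [sub_nonneg, div_le_one hd]
    exact hβx
  have hwC : infDist w Z ≤ β := hwp ▸ infDist_le_dist_of_mem hp
  exact hxw ▸ infDist_le_dist_of_mem hwC

theorem infDist_eq_add_infDist_enlargement {Z : Set E} {x p : E} (hp : p ∈ Z)
    (hpx : dist x p = infDist x Z) {β : ℝ} (hβ : 0 < β) (hβx : β ≤ infDist x Z) :
    infDist x Z = β + infDist x {u | infDist u Z ≤ β} := by
  linarith [infDist_sub_le_infDist_enlargement ⟨p, hp⟩ hβ.le x,
    infDist_enlargement_le hp hpx hβ hβx]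

end Enlargement

section NearestPoint

variable {X : Type*} [NormedAddCommGroup X] [InnerProductSpace ℝ X]

theorem real_inner_le_zero_of_dist_eq_infDist {Z : Set X} (hZ : Convex ℝ Z) {x p : X}
    (hp : p ∈ Z) (hpx : dist x p = infDist x Z) {z : X} (hz : z ∈ Z) :
    ⟪x - p, z - p⟫ ≤ 0 := by
  refine (norm_eq_iInf_iff_real_inner_le_zero hZ hp).1 ?_ z hz
  rw [← dist_eq_norm, hpx, infDist_eq_iInf]
  simp only [dist_eq_norm]

theorem sq_norm_sub_sub_two_mul_dist_le {Z : Set X} (hZ : Convex ℝ Z) {x p : X}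
    (hp : p ∈ Z) (hpx : dist x p = infDist x Z) (y : X) {z : X} (hz : z ∈ Z) :
    ‖x - p‖ ^ 2 - 2 * ‖x - p‖ * dist y z ≤ ‖x - y‖ ^ 2 - ‖p - y‖ ^ 2 := by
  have hexpand : ‖x - y‖ ^ 2 - ‖p - y‖ ^ 2 = ‖x - p‖ ^ 2 + 2 * ⟪x - p, p - y⟫ := by
    rw [show x - y = (x - p) + (p - y) by abel, norm_add_sq_real]
    ring
  have hsplit : ⟪x - p, p - y⟫ = -⟪x - p, z - p⟫ + ⟪x - p, z - y⟫ := by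
    rw [← inner_neg_right, ← inner_add_right]
    congr 1
    abel
  have hcs : -(‖x - p‖ * dist y z) ≤ ⟪x - p, z - y⟫ := by
    rw [dist_comm, dist_eq_norm]
    exact neg_le_of_abs_le (abs_real_inner_le_norm _ _)
  linarith [real_inner_le_zero_of_dist_eq_infDist hZ hp hpx hz]

end NearestPoint

theorem intrepid_projector_projection_case_general
    {X : Type*} [NormedAddCommGroup X] [InnerProductSpace ℝ X]
    (Z : Set X) (hZconv : Convex ℝ Z)
    (β : ℝ) (hβ : 0 < β)
    (PZ : X → X) (hPZ : ∀ x : X, PZ x ∈ Z ∧ dist x (PZ x) = Metric.infDist x Z)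
    (C : Set X) (hC : C = {x : X | Metric.infDist x Z ≤ β})
    (Q : X → X)
    (hQ₁ : ∀ x : X, 2 * β ≤ Metric.infDist x Z → Q x = PZ x)
    (α : ℝ) (hα : α ∈ Set.Icc (0 : ℝ) β)
    (y : X) (hy : Metric.infDist y Z ≤ α)
    (x : X) (hx : 2 * β ≤ Metric.infDist x Z) :
    ‖x - y‖ ^ 2 - ‖Q x - y‖ ^ 2 ≥ 2 * (β - α) * ‖x - Q x‖ ∧
    ‖x - Q x‖ = Metric.infDist x Z ∧
    Metric.infDist x Z = β + Metric.infDist x C ∧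
    ‖x - y‖ ^ 2 - ‖Q x - y‖ ^ 2 ≥ 4 * β * (β - α) := by
  obtain ⟨hpZ, hpx⟩ := hPZ x
  obtain ⟨hzZ, hyz⟩ := hPZ y
  have hQx : Q x = PZ x := hQ₁ x hx
  have hnorm : ‖x - Q x‖ = infDist x Z := by rw [hQx, ← dist_eq_norm, hpx]
  have hgain := sq_norm_sub_sub_two_mul_dist_le hZconv hpZ hpx y hzZ
  rw [← hQx, hnorm, hyz] at hgain
  have hstep : ‖x - y‖ ^ 2 - ‖Q x - y‖ ^ 2 ≥ 2 * (β - α) * ‖x - Q x‖ := by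
    rw [hnorm]
    nlinarith [hα.1]
  refine ⟨hstep, hnorm, hC ▸ infDist_eq_add_infDist_enlargement hpZ hpx hβ (by linarith), ?_⟩
  rw [hnorm] at hstep
  nlinarith [hα.2]

/-- intrepid projector: projection step.
Let `X` be a real Hilbert space, `Z` nonempty closed convex, `β > 0`,
`C := Z_[β]`, `Q` the intrepid projector onto `C`.  Let `α ∈ [0,β]`,
`y ∈ Z_[α]`, and `x ∈ X` with `d_Z(x) ≥ 2β`.  Then
`‖x − y‖² − ‖Qx − y‖² ≥ 2(β−α)‖x − Qx‖`, where
`‖x − Qx‖ = d_Z(x) = β + d_C(x)`; consequently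
`‖x − y‖² − ‖Qx − y‖² ≥ 4β(β−α)`. -/
theorem intrepid_projector_projection_case
    {X : Type*} [NormedAddCommGroup X] [InnerProductSpace ℝ X] [CompleteSpace X]
    (Z : Set X) (hZne : Z.Nonempty) (hZcl : IsClosed Z) (hZconv : Convex ℝ Z)
    (β : ℝ) (hβ : 0 < β)
    (PZ : X → X) (hPZ : ∀ x : X, PZ x ∈ Z ∧ dist x (PZ x) = Metric.infDist x Z)
    (C : Set X) (hC : C = {x : X | Metric.infDist x Z ≤ β})
    (Q : X → X)
    (hQ₁ : ∀ x : X, 2 * β ≤ Metric.infDist x Z → Q x = PZ x)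
    (hQ₂ : ∀ x : X, Metric.infDist x Z ≤ β → Q x = x)
    (hQ₃ : ∀ x : X, β < Metric.infDist x Z → Metric.infDist x Z < 2 * β →
      Q x = x + (1 - Metric.infDist x Z / β) • (x - PZ x))
    (α : ℝ) (hα : α ∈ Set.Icc (0 : ℝ) β)
    (y : X) (hy : Metric.infDist y Z ≤ α)
    (x : X) (hx : 2 * β ≤ Metric.infDist x Z) :
    ‖x - y‖ ^ 2 - ‖Q x - y‖ ^ 2 ≥ 2 * (β - α) * ‖x - Q x‖ ∧
    ‖x - Q x‖ = Metric.infDist x Z ∧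
    Metric.infDist x Z = β + Metric.infDist x C ∧
    ‖x - y‖ ^ 2 - ‖Q x - y‖ ^ 2 ≥ 4 * β * (β - α) :=
  intrepid_projector_projection_case_general Z hZconv β hβ PZ hPZ C hC Q hQ₁ α hα y hy x hx
end

section
/- Let X be a real Hilbert space, let Z be a nonempty closed convex subset of X, let β > 0, set C := Z_{[β]}, and let Q be the intrepid projector onto C with respect to Z and β. Then for every α ∈ [0, β], every y ∈ Z_{[α]}, and every x ∈ X, one has ‖x − y‖² − ‖Qx − y‖² ≥ 2(β−α)‖x − Qx‖ ≥ 2(β−α)·d_C(x). -/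
/-!
Write `p = P_Z x`, `d = ‖x - p‖`. The intrepid projector moves `x` towards `p`, `Qx = x - t (x - p)`
with `t = 0`, `d/β - 1` or `1`. The variational inequality of `p`, together with a point `q ∈ Z`
within `α` of `y`, gives `⟪x - y, x - p⟫ ≥ d² - α d`; expanding the square then reduces the master
inequality (for `t > 0`) to the scalar condition `2β ≤ (2 - t) d`, which in the middle regime is
`(d - β)(2β - d) ≥ 0`. Since `Qx - p = (1 - t)(x - p)` and `(1 - t) d ≤ β`, the point `Qx` lies in
`C`, which gives the comparison with `d_C(x)`.
-/

open scoped InnerProductSpace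

section

variable {X : Type*} [NormedAddCommGroup X] [InnerProductSpace ℝ X]

theorem real_inner_sub_le_zero_of_dist_eq_infDist {Z : Set X} (hZ : Convex ℝ Z) {x p : X}
    (hp : p ∈ Z) (hpx : dist x p = Metric.infDist x Z) : ∀ z ∈ Z, ⟪x - p, z - p⟫_ℝ ≤ 0 := by
  refine (norm_eq_iInf_iff_real_inner_le_zero hZ hp).mp ?_
  simp only [← dist_eq_norm, hpx, Metric.infDist_eq_iInf]

theorem sq_norm_sub_sub_mul_norm_le_real_inner {Z : Set X} {x y p q : X}
    (hvar : ∀ z ∈ Z, ⟪x - p, z - p⟫_ℝ ≤ 0) (hq : q ∈ Z) :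
    ‖x - p‖ ^ 2 - ‖y - q‖ * ‖x - p‖ ≤ ⟪x - y, x - p⟫_ℝ := by
  have hpq : 0 ≤ ⟪p - q, x - p⟫_ℝ := by
    rw [← neg_sub q p, inner_neg_left, real_inner_comm]
    linarith [hvar q hq]
  have hqy : -(‖y - q‖ * ‖x - p‖) ≤ ⟪q - y, x - p⟫_ℝ := by
    rw [← neg_sub y q, inner_neg_left, neg_le_neg_iff]
    exact real_inner_le_norm _ _
  calc ‖x - p‖ ^ 2 - ‖y - q‖ * ‖x - p‖
      ≤ ⟪x - p, x - p⟫_ℝ + ⟪p - q, x - p⟫_ℝ + ⟪q - y, x - p⟫_ℝ := by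
        rw [real_inner_self_eq_norm_sq]; linarith
    _ = ⟪x - y, x - p⟫_ℝ := by
        rw [← inner_add_left, ← inner_add_left, sub_add_sub_cancel, sub_add_sub_cancel]

theorem mul_norm_smul_le_sq_norm_sub_sq_norm_sub_smul {w u : X} {t a b : ℝ} (ht : 0 ≤ t)
    (hw : ‖u‖ ^ 2 - a * ‖u‖ ≤ ⟪w, u⟫_ℝ) (hb : 2 * b ≤ (2 - t) * ‖u‖) :
    2 * (b - a) * ‖t • u‖ ≤ ‖w‖ ^ 2 - ‖w - t • u‖ ^ 2 := by
  rw [norm_sub_sq_real, real_inner_smul_right, norm_smul, Real.norm_eq_abs, abs_of_nonneg ht]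
  nlinarith [mul_le_mul_of_nonneg_left hw ht, mul_le_mul_of_nonneg_left hb
    (mul_nonneg ht (norm_nonneg u))]

theorem infDist_sub_smul_sub_le {Z : Set X} {x p : X} (hp : p ∈ Z) {t : ℝ} (ht : t ≤ 1) :
    Metric.infDist (x - t • (x - p)) Z ≤ (1 - t) * ‖x - p‖ := by
  calc Metric.infDist (x - t • (x - p)) Z ≤ ‖x - t • (x - p) - p‖ :=
        dist_eq_norm (x - t • (x - p)) p ▸ Metric.infDist_le_dist_of_mem hp
    _ = (1 - t) * ‖x - p‖ := by
        rw [show x - t • (x - p) - p = (1 - t) • (x - p) by rw [sub_smul, one_smul]; abel,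
          norm_smul, Real.norm_eq_abs, abs_of_nonneg (sub_nonneg.mpr ht)]

theorem exists_intrepid_step {x p Qx : X} {β d : ℝ} (hβ : 0 < β) (hd : β < d)
    (hfar : 2 * β ≤ d → Qx = p) (hmid : d < 2 * β → Qx = x + (1 - d / β) • (x - p)) :
    ∃ t : ℝ, 0 ≤ t ∧ t ≤ 1 ∧ Qx = x - t • (x - p) ∧ 2 * β ≤ (2 - t) * d ∧ (1 - t) * d ≤ β := by
  rcases le_or_gt (2 * β) d with hfar' | hmid'
  · exact ⟨1, zero_le_one, le_rfl, by rw [hfar hfar', one_smul, sub_sub_cancel], by linarith,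
      by linarith⟩
  · refine ⟨d / β - 1, ?_, ?_, ?_, ?_, ?_⟩
    · rw [sub_nonneg, le_div_iff₀ hβ]; linarith
    · rw [sub_le_iff_le_add, div_le_iff₀ hβ]; linarith
    · rw [hmid hmid', ← neg_sub, neg_smul, ← sub_eq_add_neg]
    · rw [← sub_nonneg]
      have : (2 - (d / β - 1)) * d - 2 * β = (d - β) * (2 * β - d) / β := by field_simp; ring
      rw [this]
      exact div_nonneg (mul_nonneg (by linarith) (by linarith)) hβ.le
    · rw [← sub_nonneg]
      have : β - (1 - (d / β - 1)) * d = (d - β) ^ 2 / β := by field_simp; ring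
      rw [this]
      positivity

end

theorem intrepid_projector_master_inequality_general
    {X : Type*} [NormedAddCommGroup X] [InnerProductSpace ℝ X]
    (Z : Set X) (hZconv : Convex ℝ Z)
    (β : ℝ) (hβ : 0 < β)
    (PZ : X → X) (hPZ : ∀ x : X, PZ x ∈ Z ∧ dist x (PZ x) = Metric.infDist x Z)
    (C : Set X) (hC : C = {x : X | Metric.infDist x Z ≤ β})
    (Q : X → X)
    (hQ₁ : ∀ x : X, 2 * β ≤ Metric.infDist x Z → Q x = PZ x)
    (hQ₂ : ∀ x : X, Metric.infDist x Z ≤ β → Q x = x)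
    (hQ₃ : ∀ x : X, β < Metric.infDist x Z → Metric.infDist x Z < 2 * β →
      Q x = x + (1 - Metric.infDist x Z / β) • (x - PZ x)) :
    ∀ α ∈ Set.Icc (0 : ℝ) β, ∀ y : X, Metric.infDist y Z ≤ α → ∀ x : X,
      ‖x - y‖ ^ 2 - ‖Q x - y‖ ^ 2 ≥ 2 * (β - α) * ‖x - Q x‖ ∧
      2 * (β - α) * ‖x - Q x‖ ≥ 2 * (β - α) * Metric.infDist x C := by
  rintro α ⟨-, hαβ⟩ y hy x
  obtain ⟨hpx, hdx⟩ := hPZ x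
  obtain ⟨hqy, hdy⟩ := hPZ y
  rcases le_or_gt (Metric.infDist x Z) β with hnear | hfar
  · have hxC : x ∈ C := hC ▸ hnear
    simp [hQ₂ x hnear, Metric.infDist_zero_of_mem hxC]
  obtain ⟨t, ht0, ht1, hQx, hstep, hQZ⟩ := exists_intrepid_step hβ hfar (hQ₁ x) (hQ₃ x hfar)
  rw [← hdx, dist_eq_norm] at hstep hQZ
  have hinner : ‖x - PZ x‖ ^ 2 - α * ‖x - PZ x‖ ≤ ⟪x - y, x - PZ x⟫_ℝ := by
    have := sq_norm_sub_sub_mul_norm_le_real_inner (y := y)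
      (real_inner_sub_le_zero_of_dist_eq_infDist hZconv hpx hdx) hqy
    have hyq : ‖y - PZ y‖ ≤ α := by rw [← dist_eq_norm, hdy]; exact hy
    linarith [mul_le_mul_of_nonneg_right hyq (norm_nonneg (x - PZ x))]
  have hQC : Q x ∈ C := hC ▸ hQx ▸ (infDist_sub_smul_sub_le hpx ht1).trans hQZ
  refine ⟨?_, ?_⟩
  · rw [hQx, sub_sub_cancel, sub_right_comm]
    exact mul_norm_smul_le_sq_norm_sub_sq_norm_sub_smul ht0 hinner hstep
  · exact mul_le_mul_of_nonneg_left
      (dist_eq_norm x (Q x) ▸ Metric.infDist_le_dist_of_mem hQC) (by linarith)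

/-- intrepid projector: master inequality.
Let `X` be a real Hilbert space, `Z` nonempty closed convex, `β > 0`,
`C := Z_[β]`, `Q` the intrepid projector onto `C`.  Then for every
`α ∈ [0,β]`, every `y ∈ Z_[α]`, and every `x ∈ X`,
`‖x − y‖² − ‖Qx − y‖² ≥ 2(β−α)‖x − Qx‖ ≥ 2(β−α) d_C(x)`. -/
theorem intrepid_projector_master_inequality
    {X : Type*} [NormedAddCommGroup X] [InnerProductSpace ℝ X] [CompleteSpace X]
    (Z : Set X) (hZne : Z.Nonempty) (hZcl : IsClosed Z) (hZconv : Convex ℝ Z)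
    (β : ℝ) (hβ : 0 < β)
    (PZ : X → X) (hPZ : ∀ x : X, PZ x ∈ Z ∧ dist x (PZ x) = Metric.infDist x Z)
    (C : Set X) (hC : C = {x : X | Metric.infDist x Z ≤ β})
    (Q : X → X)
    (hQ₁ : ∀ x : X, 2 * β ≤ Metric.infDist x Z → Q x = PZ x)
    (hQ₂ : ∀ x : X, Metric.infDist x Z ≤ β → Q x = x)
    (hQ₃ : ∀ x : X, β < Metric.infDist x Z → Metric.infDist x Z < 2 * β →
      Q x = x + (1 - Metric.infDist x Z / β) • (x - PZ x)) :
    ∀ α ∈ Set.Icc (0 : ℝ) β, ∀ y : X, Metric.infDist y Z ≤ α → ∀ x : X,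
      ‖x - y‖ ^ 2 - ‖Q x - y‖ ^ 2 ≥ 2 * (β - α) * ‖x - Q x‖ ∧
      2 * (β - α) * ‖x - Q x‖ ≥ 2 * (β - α) * Metric.infDist x C :=
  intrepid_projector_master_inequality_general Z hZconv β hβ PZ hPZ C hC Q hQ₁ hQ₂ hQ₃
end

section
/- Consider the CycIP setup in a real Hilbert space X with I₁ = ∅ (so every T_i is an intrepid projector onto C_i = (Z_i)_{[β_i]}), an index selector i: ℕ → I, and suppose that the interior of C := ⋂_{i∈I} C_i is nonempty. Then the sequence generated by x_{k+1} := T_{i(k)} x_k from any x₀ ∈ X converges strongly (in norm) to some point of C. -/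
/-!
An intrepid projector moves `x` towards its nearest point `p ∈ Z` by the fraction
`t = min 1 (max 0 (d/β - 1))` of `x - p`, where `d = d_Z(x)`. Expanding the square, this step does
not increase the distance to any point of the enlargement `Z_[β]`, and it lands in `Z_[β]`. So the
iterates are Fejér monotone with respect to `C`. If `C` contains a ball of radius `r` around `c`,
testing the monotonicity at the point of the ball farthest along the step gives
`2r ‖x_k - x_{k+1}‖ ≤ ‖x_k - c‖² - ‖x_{k+1} - c‖²`, so the steps have finite total length and
the sequence converges. Its limit is in each (closed) `C_i`, which contains infinitely many iterates.
-/

open scoped RealInnerProductSpace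
open Metric

/-- The intrepid projector is `x ↦ x - intrepidCoeff β (d_Z x) • (x - P_Z x)`. -/
noncomputable def intrepidCoeff (β d : ℝ) : ℝ := min 1 (max 0 (d / β - 1))

section intrepidCoeff

variable {β d : ℝ}

lemma intrepidCoeff_nonneg : 0 ≤ intrepidCoeff β d :=
  le_min zero_le_one (le_max_left _ _)

lemma intrepidCoeff_le_one : intrepidCoeff β d ≤ 1 := min_le_left _ _

lemma intrepidCoeff_of_le (hβ : 0 < β) (h : d ≤ β) : intrepidCoeff β d = 0 := by
  have : d / β ≤ 1 := (div_le_one hβ).2 h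
  simp [intrepidCoeff, max_eq_left (by linarith : d / β - 1 ≤ 0)]

lemma intrepidCoeff_of_two_mul_le (hβ : 0 < β) (h : 2 * β ≤ d) : intrepidCoeff β d = 1 := by
  have : 2 ≤ d / β := (le_div_iff₀ hβ).2 (by linarith)
  simp only [intrepidCoeff, max_eq_right (by linarith : (0 : ℝ) ≤ d / β - 1)]
  exact min_eq_left (by linarith)

lemma intrepidCoeff_of_lt_of_lt (hβ : 0 < β) (h₁ : β < d) (h₂ : d < 2 * β) :
    intrepidCoeff β d = d / β - 1 := by
  have : 1 < d / β := (one_lt_div hβ).2 h₁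
  have : d / β < 2 := (div_lt_iff₀ hβ).2 (by linarith)
  simp only [intrepidCoeff, max_eq_right (by linarith : (0 : ℝ) ≤ d / β - 1)]
  exact min_eq_right (by linarith)

-- In the middle zone this is `(d - β) (d - 2β) ≤ 0`.
lemma intrepidCoeff_mul_sub_nonpos (hβ : 0 < β) :
    intrepidCoeff β d * (intrepidCoeff β d * d - 2 * (d - β)) ≤ 0 := by
  rcases le_or_gt d β with h₁ | h₁
  · simp [intrepidCoeff_of_le hβ h₁]
  rcases lt_or_ge d (2 * β) with h₂ | h₂
  · rw [intrepidCoeff_of_lt_of_lt hβ h₁ h₂]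
    have hμ : d - β = (d / β - 1) * β := by field_simp
    rw [hμ]
    nlinarith [sq_nonneg (d / β - 1)]
  · rw [intrepidCoeff_of_two_mul_le hβ h₂]; linarith

lemma one_sub_intrepidCoeff_mul_le (hβ : 0 < β) : (1 - intrepidCoeff β d) * d ≤ β := by
  rcases le_or_gt d β with h₁ | h₁
  · simpa [intrepidCoeff_of_le hβ h₁] using h₁
  rcases lt_or_ge d (2 * β) with h₂ | h₂
  · rw [intrepidCoeff_of_lt_of_lt hβ h₁ h₂]
    have hμ : (d / β - 1) * β = d - β := by field_simp
    nlinarith [sq_nonneg (d - β)]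
  · rw [intrepidCoeff_of_two_mul_le hβ h₂]; linarith

end intrepidCoeff

lemma eq_sub_intrepidCoeff_smul {X : Type*} [AddCommGroup X] [Module ℝ X] {β d : ℝ}
    (hβ : 0 < β) {x p y : X} (h₁ : 2 * β ≤ d → y = p) (h₂ : d ≤ β → y = x)
    (h₃ : β < d → d < 2 * β → y = x + (1 - d / β) • (x - p)) :
    y = x - intrepidCoeff β d • (x - p) := by
  rcases le_or_gt d β with hd₁ | hd₁
  · simp [h₂ hd₁, intrepidCoeff_of_le hβ hd₁]
  rcases lt_or_ge d (2 * β) with hd₂ | hd₂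
  · rw [h₃ hd₁ hd₂, intrepidCoeff_of_lt_of_lt hβ hd₁ hd₂]; module
  · rw [h₁ hd₂, intrepidCoeff_of_two_mul_le hβ hd₂, one_smul, sub_sub_cancel]

section Hilbert

variable {X : Type*} [NormedAddCommGroup X] [InnerProductSpace ℝ X]

lemma norm_sub_smul_sub_sq (x v z : X) (t : ℝ) :
    ‖x - t • v - z‖ ^ 2 = ‖x - z‖ ^ 2 - t * (2 * ⟪v, x - z⟫ - t * ‖v‖ ^ 2) := by
  rw [show x - t • v - z = (x - z) - t • v by abel, norm_sub_sq_real, real_inner_smul_right,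
    norm_smul, Real.norm_eq_abs, mul_pow, sq_abs, real_inner_comm]
  ring

variable {Z : Set X} {x p : X}

lemma real_inner_sub_le_zero_of_dist_eq_infDist_s10 (hZ : Convex ℝ Z) (hp : p ∈ Z)
    (hxp : dist x p = infDist x Z) {q : X} (hq : q ∈ Z) : ⟪x - p, q - p⟫ ≤ 0 := by
  have h : ‖x - p‖ = ⨅ w : Z, ‖x - w‖ := by
    simp only [← dist_eq_norm, hxp, infDist_eq_iInf]
  exact (norm_eq_iInf_iff_real_inner_le_zero hZ hp).mp h q hq

lemma sq_sub_real_inner_le_mul_infDist (hZ : Convex ℝ Z) (hp : p ∈ Z)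
    (hxp : dist x p = infDist x Z) (z : X) :
    ‖x - p‖ ^ 2 - ⟪x - p, x - z⟫ ≤ ‖x - p‖ * infDist z Z := by
  have hq : ∀ q ∈ Z, ‖x - p‖ ^ 2 - ⟪x - p, x - z⟫ ≤ ‖x - p‖ * dist z q := by
    intro q hq
    have hsplit : ⟪x - p, x - z⟫ = ‖x - p‖ ^ 2 - ⟪x - p, q - p⟫ + ⟪x - p, q - z⟫ := by
      rw [show x - z = (x - p) - (q - p) + (q - z) by abel, inner_add_right, inner_sub_right,
        real_inner_self_eq_norm_sq]
    have hcs := neg_le_of_abs_le (abs_real_inner_le_norm (x - p) (q - z))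
    rw [dist_eq_norm, norm_sub_rev z q]
    linarith [real_inner_sub_le_zero_of_dist_eq_infDist_s10 hZ hp hxp hq]
  rcases (norm_nonneg (x - p)).eq_or_lt with h0 | hpos
  · simp [norm_eq_zero.mp h0.symm]
  rw [← div_le_iff₀' hpos, le_infDist ⟨p, hp⟩]
  exact fun q hq' => (div_le_iff₀' hpos).2 (hq q hq')

variable {β : ℝ}

lemma norm_sub_intrepidCoeff_smul_le (hZ : Convex ℝ Z) (hβ : 0 < β) (hp : p ∈ Z)
    (hxp : dist x p = infDist x Z) {z : X} (hz : infDist z Z ≤ β) :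
    ‖x - intrepidCoeff β (infDist x Z) • (x - p) - z‖ ≤ ‖x - z‖ := by
  set d := infDist x Z
  set t := intrepidCoeff β d
  have hd : ‖x - p‖ = d := by rw [← dist_eq_norm, hxp]
  have hinner := sq_sub_real_inner_le_mul_infDist hZ hp hxp z
  rw [hd] at hinner
  have hdz : d * infDist z Z ≤ d * β := mul_le_mul_of_nonneg_left hz infDist_nonneg
  have ht := intrepidCoeff_mul_sub_nonpos hβ (d := d)
  have hsq : ‖x - t • (x - p) - z‖ ^ 2 ≤ ‖x - z‖ ^ 2 := by
    rw [norm_sub_smul_sub_sq, hd]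
    have hinner' : 2 * (d ^ 2 - d * β) ≤ 2 * ⟪x - p, x - z⟫ := by linarith
    nlinarith [mul_le_mul_of_nonneg_left hinner' (intrepidCoeff_nonneg (β := β) (d := d)),
      (infDist_nonneg : 0 ≤ d)]
  exact (pow_le_pow_iff_left₀ (norm_nonneg _) (norm_nonneg _) two_ne_zero).1 hsq

lemma infDist_sub_intrepidCoeff_smul_le (hβ : 0 < β) (hp : p ∈ Z)
    (hxp : dist x p = infDist x Z) :
    infDist (x - intrepidCoeff β (infDist x Z) • (x - p)) Z ≤ β := by
  calc infDist (x - intrepidCoeff β (infDist x Z) • (x - p)) Z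
      ≤ ‖(1 - intrepidCoeff β (infDist x Z)) • (x - p)‖ :=
        (infDist_le_dist_of_mem hp).trans_eq (by rw [dist_eq_norm]; congr 1; module)
    _ = (1 - intrepidCoeff β (infDist x Z)) * infDist x Z := by
        rw [norm_smul, Real.norm_of_nonneg (sub_nonneg.2 intrepidCoeff_le_one), ← dist_eq_norm,
          hxp]
    _ ≤ β := one_sub_intrepidCoeff_mul_le hβ

end Hilbert

section Fejer

variable {E : Type*} [NormedAddCommGroup E] [InnerProductSpace ℝ E] {c : E} {r : ℝ}

-- Test the monotonicity at `c + u ∈ closedBall c r`, with `u` of length `r` along `y - y'`.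
lemma two_mul_mul_norm_sub_le_sq_sub_sq {y y' : E} (hr : 0 ≤ r)
    (h : ∀ z ∈ closedBall c r, ‖y' - z‖ ≤ ‖y - z‖) :
    2 * r * ‖y - y'‖ ≤ ‖y - c‖ ^ 2 - ‖y' - c‖ ^ 2 := by
  set v := y - y'
  set u := (r / ‖v‖) • v
  have hu : ‖u‖ ≤ r := by
    rcases (norm_nonneg v).eq_or_lt with h0 | hpos
    · simp [u, ← h0, hr]
    · rw [norm_smul, Real.norm_of_nonneg (by positivity), div_mul_cancel₀ _ hpos.ne']
  have hvu : ⟪v, u⟫ = r * ‖v‖ := by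
    rcases (norm_nonneg v).eq_or_lt with h0 | hpos
    · simp [u, ← h0]
    · rw [real_inner_smul_right, real_inner_self_eq_norm_sq]; field_simp
  have hz := h (c + u) (by simpa [dist_eq_norm] using hu)
  have hsq := pow_le_pow_left₀ (norm_nonneg _) hz 2
  rw [show y' - (c + u) = (y' - c) - u by abel, show y - (c + u) = (y - c) - u by abel,
    norm_sub_sq_real (y' - c) u, norm_sub_sq_real (y - c) u] at hsq
  have : ⟪y - c, u⟫ - ⟪y' - c, u⟫ = r * ‖v‖ := by
    rw [← inner_sub_left, sub_sub_sub_cancel_right, hvu]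
  linarith

lemma cauchySeq_of_forall_closedBall_norm_sub_le {x : ℕ → E} (hr : 0 < r)
    (h : ∀ k, ∀ z ∈ closedBall c r, ‖x (k + 1) - z‖ ≤ ‖x k - z‖) : CauchySeq x := by
  refine cauchySeq_of_summable_dist <|
    summable_of_sum_range_le (c := ‖x 0 - c‖ ^ 2 / (2 * r)) (fun _ => dist_nonneg) fun n => ?_
  have hstep : ∀ k ∈ Finset.range n,
      2 * r * dist (x k) (x (k + 1)) ≤ ‖x k - c‖ ^ 2 - ‖x (k + 1) - c‖ ^ 2 := fun k _ => by
    rw [dist_eq_norm]; exact two_mul_mul_norm_sub_le_sq_sub_sq hr.le (h k)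
  have hsum := Finset.sum_le_sum hstep
  rw [← Finset.mul_sum, Finset.sum_range_sub' (fun k => ‖x k - c‖ ^ 2)] at hsum
  rw [le_div_iff₀' (by positivity)]
  nlinarith [sq_nonneg ‖x n - c‖]

end Fejer

theorem cycIP_intrepid_only_strong_convergence_general
    {X : Type*} [NormedAddCommGroup X] [InnerProductSpace ℝ X] [CompleteSpace X]
    {ι : Type*}
    (C : ι → Set X) (Z : ι → Set X) (β : ι → ℝ) (PZ : ι → X → X)
    (hZ : ∀ i, (Z i).Nonempty ∧ IsClosed (Z i) ∧ Convex ℝ (Z i))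
    (hβ : ∀ i, 0 < β i)
    (hC : ∀ i, C i = {x : X | Metric.infDist x (Z i) ≤ β i})
    (hPZ : ∀ i, ∀ x : X, PZ i x ∈ Z i ∧ dist x (PZ i x) = Metric.infDist x (Z i))
    (T : ι → X → X)
    (hT : ∀ i, ∀ x : X,
      (2 * β i ≤ Metric.infDist x (Z i) → T i x = PZ i x) ∧
      (Metric.infDist x (Z i) ≤ β i → T i x = x) ∧
      (β i < Metric.infDist x (Z i) → Metric.infDist x (Z i) < 2 * β i →
        T i x = x + (1 - Metric.infDist x (Z i) / β i) • (x - PZ i x)))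
    (hint : (interior (⋂ i, C i)).Nonempty)
    (sel : ℕ → ι) (hsel : ∀ i, {k : ℕ | sel k = i}.Infinite)
    (x : ℕ → X) (hx : ∀ k : ℕ, x (k + 1) = T (sel k) (x k)) :
    ∃ xbar ∈ ⋂ i, C i, Filter.Tendsto x Filter.atTop (nhds xbar) := by
  have hT_eq : ∀ i y, T i y = y - intrepidCoeff (β i) (infDist y (Z i)) • (y - PZ i y) :=
    fun i y => eq_sub_intrepidCoeff_smul (hβ i) (hT i y).1 (hT i y).2.1 (hT i y).2.2
  have hT_le : ∀ i y, ∀ z ∈ C i, ‖T i y - z‖ ≤ ‖y - z‖ := fun i y z hz => by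
    rw [hC] at hz
    rw [hT_eq]
    exact norm_sub_intrepidCoeff_smul_le (hZ i).2.2 (hβ i) (hPZ i y).1 (hPZ i y).2 hz
  have hT_mem : ∀ i y, T i y ∈ C i := fun i y => by
    rw [hT_eq, hC]
    exact infDist_sub_intrepidCoeff_smul_le (hβ i) (hPZ i y).1 (hPZ i y).2
  obtain ⟨c, hc⟩ := hint
  obtain ⟨ε, hε, hball⟩ := isOpen_iff.mp isOpen_interior c hc
  have hcauchy : CauchySeq x := by
    refine cauchySeq_of_forall_closedBall_norm_sub_le (c := c) (half_pos hε) fun k z hz => ?_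
    have hzC := interior_subset (hball (closedBall_subset_ball (half_lt_self hε) hz))
    rw [hx]
    exact hT_le _ _ _ (Set.mem_iInter.mp hzC _)
  obtain ⟨xbar, hxbar⟩ := cauchySeq_tendsto_of_complete hcauchy
  refine ⟨xbar, Set.mem_iInter.mpr fun i => ?_, hxbar⟩
  have hclosed : IsClosed (C i) := by
    rw [hC]; exact isClosed_le (continuous_infDist_pt _) continuous_const
  have hfreq : ∃ᶠ k in Filter.atTop, x (k + 1) ∈ C i :=
    (Nat.frequently_atTop_iff_infinite.mpr (hsel i)).mono fun k hk => by
      rw [hx, ← hk]; exact hT_mem _ _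
  exact hclosed.mem_of_frequently_of_tendsto hfreq
    (hxbar.comp (Filter.tendsto_add_atTop_nat 1))

/-- intrepid projections only.
CycIP setup with `I₁ = ∅`: every `T i` is the intrepid projector onto
`C i = (Z i)_[β i]`.  If the interior of `C := ⋂ i, C i` is nonempty, then
from any starting point the generated sequence converges strongly (in norm)
to some point of `C`. -/
theorem cycIP_intrepid_only_strong_convergence
    {X : Type*} [NormedAddCommGroup X] [InnerProductSpace ℝ X] [CompleteSpace X]
    {ι : Type*} [Fintype ι] [Nonempty ι]
    (C : ι → Set X) (Z : ι → Set X) (β : ι → ℝ) (PZ : ι → X → X)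
    (hZ : ∀ i, (Z i).Nonempty ∧ IsClosed (Z i) ∧ Convex ℝ (Z i))
    (hβ : ∀ i, 0 < β i)
    (hC : ∀ i, C i = {x : X | Metric.infDist x (Z i) ≤ β i})
    (hPZ : ∀ i, ∀ x : X, PZ i x ∈ Z i ∧ dist x (PZ i x) = Metric.infDist x (Z i))
    (T : ι → X → X)
    (hT : ∀ i, ∀ x : X,
      (2 * β i ≤ Metric.infDist x (Z i) → T i x = PZ i x) ∧
      (Metric.infDist x (Z i) ≤ β i → T i x = x) ∧
      (β i < Metric.infDist x (Z i) → Metric.infDist x (Z i) < 2 * β i →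
        T i x = x + (1 - Metric.infDist x (Z i) / β i) • (x - PZ i x)))
    (hint : (interior (⋂ i, C i)).Nonempty)
    (sel : ℕ → ι) (hsel : ∀ i, {k : ℕ | sel k = i}.Infinite)
    (x : ℕ → X) (hx : ∀ k : ℕ, x (k + 1) = T (sel k) (x k)) :
    ∃ xbar ∈ ⋂ i, C i, Filter.Tendsto x Filter.atTop (nhds xbar) :=
  cycIP_intrepid_only_strong_convergence_general C Z β PZ hZ hβ hC hPZ T hT hint sel hsel x hx
end

section
/- Consider the CycIP setup in a real Hilbert space X, and suppose that ⋂_{i∈I₁} C_i ∩ ⋂_{i∈I₀} int C_i ≠ ∅ and that the control is quasicyclic with some quasiperiod M ≥ 1. Then the sequence generated by x_{k+1} := T_{i(k)} x_k from any x₀ ∈ X converges weakly to some point of C := ⋂_{i∈I} C_i. -/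
/-!
Every operator `T i` is quasi-nonexpansive with respect to `C i`, so the iterates are Fejér
monotone with respect to `C = ⋂ i, C i`. Measured from a point `z` of
`⋂_{I₁} C i ∩ ⋂_{I₀} int (C i)`, each step decreases `‖x k - z‖²` by a fixed multiple of
`‖x (k+1) - x k‖` (an intrepid step, thanks to the slack of `z` inside the enlargement) or of
`‖x (k+1) - x k‖²` (a relaxed projection), so the steps tend to `0`. As each `T i` moves a point
by at least a fixed fraction of its distance to `C i`, quasicyclic control forces
`d_{C i}(x k) → 0` for every `i`; hence all weak cluster points lie in `C`, and Opial's argument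
for Fejér monotone sequences gives weak convergence.
-/

open scoped RealInnerProductSpace
open Metric Filter Topology

theorem exists_pos_forall_le_of_finite {ι : Type*} [Finite ι] {c : ι → ℝ} (hc : ∀ i, 0 < c i) :
    ∃ c₀ > 0, ∀ i, c₀ ≤ c i := by
  rcases isEmpty_or_nonempty ι with _ | _
  · exact ⟨1, one_pos, isEmptyElim⟩
  · obtain ⟨i₀, hi₀⟩ := Finite.exists_min c
    exact ⟨c i₀, hc i₀, hi₀⟩

theorem tendsto_zero_of_le_or_sq_le {a D : ℕ → ℝ} (ha : ∀ k, 0 ≤ a k) {c : ℝ} (hc : 0 < c)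
    (hD : ∀ k, 0 ≤ D k) (h : ∀ k, c * D k ≤ a k - a (k + 1) ∨ c * D k ^ 2 ≤ a k - a (k + 1)) :
    Tendsto D atTop (𝓝 0) := by
  have hanti : Antitone a := antitone_nat_of_succ_le fun k => by
    rcases h k with h | h <;> nlinarith [hD k]
  have hdiff : Tendsto (fun k => (a k - a (k + 1)) / c) atTop (𝓝 0) := by
    have hlim := tendsto_atTop_ciInf hanti ⟨0, by rintro _ ⟨k, rfl⟩; exact ha k⟩
    simpa using (hlim.sub (hlim.comp (tendsto_add_atTop_nat 1))).div_const c
  refine squeeze_zero hD (fun k => ?_) (by simpa using hdiff.add hdiff.sqrt)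
  have hΔ : 0 ≤ (a k - a (k + 1)) / c := div_nonneg (sub_nonneg.2 (hanti k.le_succ)) hc.le
  rcases h k with h | h
  · have hle : D k ≤ (a k - a (k + 1)) / c := by rw [le_div_iff₀ hc]; linarith
    linarith [Real.sqrt_nonneg ((a k - a (k + 1)) / c)]
  · have hle : D k ≤ √((a k - a (k + 1)) / c) :=
      Real.le_sqrt_of_sq_le (by rw [le_div_iff₀ hc]; linarith)
    linarith

theorem tendsto_infDist_of_quasicyclic {Y ι : Type*} [PseudoMetricSpace Y] {C : ι → Set Y}
    {T : ι → Y → Y} {K : ι → ℝ} (hK : ∀ i y, infDist y (C i) ≤ K i * dist y (T i y))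
    {sel : ℕ → ι} {M : ℕ} (hqc : ∀ k i, ∃ j < M, sel (k + j) = i)
    {x : ℕ → Y} (hx : ∀ k, x (k + 1) = T (sel k) (x k))
    (hreg : Tendsto (fun k => dist (x k) (x (k + 1))) atTop (𝓝 0)) (i : ι) :
    Tendsto (fun k => infDist (x k) (C i)) atTop (𝓝 0) := by
  set E := fun k => ∑ l ∈ Finset.range M, dist (x (k + l)) (x (k + l + 1))
  have hE : Tendsto E atTop (𝓝 0) := by
    simpa using tendsto_finsetSum (Finset.range M) fun l _ =>
      hreg.comp (tendsto_add_atTop_nat l)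
  refine squeeze_zero (fun k => infDist_nonneg) (fun k => ?_)
    (by simpa using hE.const_mul (|K i| + 1))
  obtain ⟨j, hjM, hj⟩ := hqc k i
  have hstep : dist (x (k + j)) (x (k + j + 1)) ≤ E k :=
    Finset.single_le_sum (f := fun l => dist (x (k + l)) (x (k + l + 1)))
      (fun _ _ => dist_nonneg) (Finset.mem_range.2 hjM)
  have hpath : dist (x k) (x (k + j)) ≤ E k :=
    (dist_le_range_sum_dist (fun l => x (k + l)) j).trans
      (Finset.sum_le_sum_of_subset_of_nonneg (Finset.range_subset_range.2 hjM.le)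
        fun _ _ _ => dist_nonneg)
  have hnear : infDist (x (k + j)) (C i) ≤ |K i| * E k :=
    calc infDist (x (k + j)) (C i) ≤ K i * dist (x (k + j)) (x (k + j + 1)) := by
          rw [hx, hj]; exact hK i _
      _ ≤ |K i| * E k := mul_le_mul (le_abs_self _) hstep dist_nonneg (abs_nonneg _)
  calc infDist (x k) (C i) ≤ infDist (x (k + j)) (C i) + dist (x k) (x (k + j)) :=
        infDist_le_infDist_add_dist
    _ ≤ (|K i| + 1) * E k := by linarith

section

variable {X : Type*} [NormedAddCommGroup X]

def IsMetricProj (S : Set X) (P : X → X) : Prop :=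
  ∀ x, P x ∈ S ∧ dist x (P x) = infDist x S

theorem IsMetricProj.norm_sub {S : Set X} {P : X → X} (hP : IsMetricProj S P) (x : X) :
    ‖x - P x‖ = infDist x S := by
  rw [← dist_eq_norm, (hP x).2]

variable [InnerProductSpace ℝ X]

def IsIntrepidProj (Z : Set X) (β : ℝ) (P T : X → X) : Prop :=
  ∀ x, (2 * β ≤ infDist x Z → T x = P x) ∧ (infDist x Z ≤ β → T x = x) ∧
    (β < infDist x Z → infDist x Z < 2 * β → T x = x + (1 - infDist x Z / β) • (x - P x))

/-- `z` is a Slater point; `decrease` is linear in the step for intrepid projectors and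
quadratic for relaxed projections. -/
structure IsCycIPStep (C : Set X) (z : X) (T : X → X) : Prop where
  mem : z ∈ C
  norm_sub_le : ∀ y, ∀ w ∈ C, ‖T y - w‖ ≤ ‖y - w‖
  infDist_le : ∃ K, ∀ y, infDist y C ≤ K * ‖T y - y‖
  decrease : ∃ c > 0, ∀ y, c * ‖T y - y‖ ≤ ‖y - z‖ ^ 2 - ‖T y - z‖ ^ 2 ∨
    c * ‖T y - y‖ ^ 2 ≤ ‖y - z‖ ^ 2 - ‖T y - z‖ ^ 2

def TendstoWeakly {α : Type*} (y : α → X) (l : Filter α) (w : X) : Prop :=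
  ∀ u, Tendsto (fun a => ⟪y a, u⟫) l (𝓝 ⟪w, u⟫)

theorem inner_sub_le_zero_of_dist_eq_infDist {S : Set X} (hS : Convex ℝ S) {x p z : X}
    (hp : p ∈ S) (hxp : dist x p = infDist x S) (hz : z ∈ S) : ⟪x - p, z - p⟫ ≤ 0 := by
  refine (norm_eq_iInf_iff_real_inner_le_zero hS hp).1 ?_ z hz
  simpa only [← dist_eq_norm, infDist_eq_iInf] using hxp

theorem exists_dist_eq_infDist_of_convex [CompleteSpace X] {S : Set X} (hne : S.Nonempty)
    (hcl : IsClosed S) (hS : Convex ℝ S) (x : X) : ∃ p ∈ S, dist x p = infDist x S := by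
  obtain ⟨p, hp, hxp⟩ := exists_norm_eq_iInf_of_complete_convex hne hcl.isComplete hS x
  exact ⟨p, hp, by simpa only [← dist_eq_norm, infDist_eq_iInf] using hxp⟩

namespace IsMetricProj

variable {S : Set X} {P : X → X}

theorem inner_sub_le_zero (hP : IsMetricProj S P) (hS : Convex ℝ S) (x : X) {y : X}
    (hy : y ∈ S) : ⟪y - P x, x - P x⟫ ≤ 0 := by
  rw [real_inner_comm]; exact inner_sub_le_zero_of_dist_eq_infDist hS (hP x).1 (hP x).2 hy

theorem sq_sub_mul_le_inner (hP : IsMetricProj S P) (hS : Convex ℝ S) (x : X) {y : X} {r : ℝ}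
    (hy : infDist y S ≤ r) : infDist x S ^ 2 - r * infDist x S ≤ ⟪x - y, x - P x⟫ := by
  have hyP : ⟪y - P y, x - P x⟫ ≤ r * infDist x S :=
    calc ⟪y - P y, x - P x⟫ ≤ ‖y - P y‖ * ‖x - P x‖ := real_inner_le_norm _ _
      _ ≤ r * infDist x S := by
        rw [hP.norm_sub, hP.norm_sub]; exact mul_le_mul_of_nonneg_right hy infDist_nonneg
  have hsplit : x - y = (x - P x) - (y - P y) - (P y - P x) := by abel
  rw [hsplit, inner_sub_left, inner_sub_left, real_inner_self_eq_norm_sq, hP.norm_sub]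
  linarith [hP.inner_sub_le_zero hS x (hP y).1]

theorem norm_sub_smul_sub_sq_le (hP : IsMetricProj S P) (hS : Convex ℝ S) (x : X) {y : X}
    {r t : ℝ} (hy : infDist y S ≤ r) (ht : 0 ≤ t) :
    ‖x - t • (x - P x) - y‖ ^ 2 ≤
      ‖x - y‖ ^ 2 - 2 * t * (infDist x S ^ 2 - r * infDist x S) + t ^ 2 * infDist x S ^ 2 := by
  rw [sub_right_comm, norm_sub_sq_real, real_inner_smul_right, norm_smul, mul_pow,
    Real.norm_eq_abs, sq_abs, hP.norm_sub]
  nlinarith [hP.sq_sub_mul_le_inner hS x hy]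

theorem norm_sub_smul_sub_self (hP : IsMetricProj S P) {t : ℝ} (ht : 0 ≤ t) (x : X) :
    ‖x - t • (x - P x) - x‖ = t * infDist x S := by
  rw [sub_sub_cancel_left, norm_neg, norm_smul, Real.norm_of_nonneg ht, hP.norm_sub]

theorem mul_infDist_le_infDist_add_smul (hP : IsMetricProj S P) (hS : Convex ℝ S) (x : X)
    (s : ℝ) : (1 + s) * infDist x S ≤ infDist (x + s • (x - P x)) S := by
  rw [le_infDist ⟨_, (hP x).1⟩]
  intro q hq
  rcases (infDist_nonneg (x := x) (s := S)).eq_or_lt with hd | hd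
  · rw [← hd, mul_zero]; exact dist_nonneg
  refine le_of_mul_le_mul_right ?_ hd
  have hPq : 0 ≤ ⟪P x - q, x - P x⟫ := by
    have := hP.inner_sub_le_zero hS x hq
    rw [← neg_sub, inner_neg_left] at this; linarith
  calc (1 + s) * infDist x S * infDist x S
      = (1 + s) * ⟪x - P x, x - P x⟫ := by rw [real_inner_self_eq_norm_sq, hP.norm_sub]; ring
    _ ≤ ⟪x + s • (x - P x) - q, x - P x⟫ := by
        have : x + s • (x - P x) - q = (1 + s) • (x - P x) + (P x - q) := by
          rw [add_smul, one_smul]; abel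
        rw [this, inner_add_left, real_inner_smul_left]; linarith
    _ ≤ dist (x + s • (x - P x)) q * infDist x S := by
        rw [dist_eq_norm, ← hP.norm_sub]; exact real_inner_le_norm _ _

theorem exists_pos_le_sub_of_mem_interior (hP : IsMetricProj S P) (hS : Convex ℝ S) {β : ℝ}
    (hβ : 0 < β) {z : X} (hz : z ∈ interior {w | infDist w S ≤ β}) :
    ∃ ε > 0, infDist z S ≤ β - ε := by
  rcases (infDist_nonneg (x := z) (s := S)).eq_or_lt with hd | hd
  · exact ⟨β, hβ, by rw [← hd, sub_self]⟩
  obtain ⟨r, hr, hball⟩ := Metric.isOpen_iff.1 isOpen_interior z hz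
  set s := r / 2 / infDist z S
  have hs : 0 ≤ s := by positivity
  have hmem : z + s • (z - P z) ∈ ball z r := by
    rw [mem_ball, dist_eq_norm, add_sub_cancel_left, norm_smul, Real.norm_of_nonneg hs,
      hP.norm_sub, div_mul_cancel₀ _ hd.ne']
    linarith
  refine ⟨s * infDist z S, mul_pos (by positivity) hd, ?_⟩
  have hfar : infDist (z + s • (z - P z)) S ≤ β :=
    interior_subset (s := {w | infDist w S ≤ β}) (hball hmem)
  linarith [hP.mul_infDist_le_infDist_add_smul hS z s]

theorem infDist_enlargement_le (hP : IsMetricProj S P) {β : ℝ} (hβ : 0 < β) {x : X}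
    (hx : β ≤ infDist x S) : infDist x {w | infDist w S ≤ β} ≤ infDist x S - β := by
  set d := infDist x S
  have hd : 0 < d := hβ.trans_le hx
  set q := x - ((d - β) / d) • (x - P x)
  have hcoef : 1 - (d - β) / d = β / d := by field_simp; ring
  have hqP : dist q (P x) = β := by
    rw [dist_eq_norm, show q - P x = (β / d) • (x - P x) by rw [← hcoef]; module,
      norm_smul, hP.norm_sub, Real.norm_of_nonneg (by positivity), div_mul_cancel₀ _ hd.ne']
  have hxq : dist x q = d - β := by
    rw [dist_eq_norm, sub_sub_cancel, norm_smul, hP.norm_sub,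
      Real.norm_of_nonneg (div_nonneg (sub_nonneg.2 hx) hd.le), div_mul_cancel₀ _ hd.ne']
  calc infDist x {w | infDist w S ≤ β} ≤ dist x q :=
        infDist_le_dist_of_mem ((infDist_le_dist_of_mem (hP x).1).trans hqP.le)
    _ = d - β := hxq

section Relaxed

variable {T : X → X} {l : ℝ}

theorem norm_relaxed_sub_self (hP : IsMetricProj S P) (hl : 0 ≤ l)
    (hT : ∀ x, T x = (1 - l) • x + l • P x) (x : X) : ‖T x - x‖ = l * infDist x S := by
  rw [← hP.norm_sub_smul_sub_self hl, hT]
  congr 1; module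

theorem mul_norm_relaxed_sub_sq_le (hP : IsMetricProj S P) (hS : Convex ℝ S) (hl : 0 < l)
    (hT : ∀ x, T x = (1 - l) • x + l • P x) (x : X) {y : X} (hy : y ∈ S) :
    (2 - l) / l * ‖T x - x‖ ^ 2 ≤ ‖x - y‖ ^ 2 - ‖T x - y‖ ^ 2 := by
  have hTx : T x = x - l • (x - P x) := by rw [hT]; module
  have key := hP.norm_sub_smul_sub_sq_le hS x (infDist_zero_of_mem hy).le hl.le
  have hcoef : (2 - l) / l * (l * infDist x S) ^ 2 =
      2 * l * infDist x S ^ 2 - l ^ 2 * infDist x S ^ 2 := by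
    field_simp
  rw [hP.norm_relaxed_sub_self hl.le hT, hcoef, hTx]
  linarith

theorem norm_relaxed_sub_le (hP : IsMetricProj S P) (hS : Convex ℝ S) (hl : 0 < l)
    (hl₂ : l ≤ 2) (hT : ∀ x, T x = (1 - l) • x + l • P x) (x : X) {y : X} (hy : y ∈ S) :
    ‖T x - y‖ ≤ ‖x - y‖ := by
  have hdec := hP.mul_norm_relaxed_sub_sq_le hS hl hT x hy
  have hcoef : 0 ≤ (2 - l) / l * ‖T x - x‖ ^ 2 := by
    have : 0 ≤ 2 - l := by linarith
    positivity
  exact (pow_le_pow_iff_left₀ (norm_nonneg _) (norm_nonneg _) two_ne_zero).1 (by linarith)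

theorem isCycIPStep_relaxed (hP : IsMetricProj S P) (hS : Convex ℝ S) (hl : l ∈ Set.Ioo 0 2)
    (hT : ∀ x, T x = (1 - l) • x + l • P x) {z : X} (hz : z ∈ S) : IsCycIPStep S z T where
  mem := hz
  norm_sub_le y _ hw := hP.norm_relaxed_sub_le hS hl.1 hl.2.le hT y hw
  infDist_le := ⟨l⁻¹, fun y => by
    rw [hP.norm_relaxed_sub_self hl.1.le hT, inv_mul_cancel_left₀ hl.1.ne']⟩
  decrease := ⟨(2 - l) / l, div_pos (by linarith [hl.2]) hl.1, fun y =>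
    .inr (hP.mul_norm_relaxed_sub_sq_le hS hl.1 hT y hz)⟩

end Relaxed

end IsMetricProj

namespace IsIntrepidProj

variable {Z : Set X} {β : ℝ} {P T : X → X}

/-- The step length `t` is `d / β - 1` clamped to `[0, 1]`, where `d = infDist x Z`. -/
theorem exists_eq_sub_smul (hT : IsIntrepidProj Z β P T) (hβ : 0 < β) (x : X) :
    ∃ t, 0 ≤ t ∧ infDist x Z - β ≤ t * infDist x Z ∧
      (t = 0 ∨ t * infDist x Z ≤ 2 * (infDist x Z - β)) ∧ T x = x - t • (x - P x) := by
  set d := infDist x Z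
  obtain ⟨hfar, hnear, hmid⟩ := hT x
  rcases le_or_gt d β with h₁ | h₁
  · exact ⟨0, le_rfl, by linarith, .inl rfl, by rw [hnear h₁, zero_smul, sub_zero]⟩
  rcases lt_or_ge d (2 * β) with h₂ | h₂
  · refine ⟨d / β - 1, ?_, ?_, .inr ?_, by rw [hmid h₁ h₂]; module⟩
    · rw [sub_nonneg, one_le_div hβ]; exact h₁.le
    · rw [div_sub_one hβ.ne', div_mul_eq_mul_div, le_div_iff₀ hβ]
      nlinarith
    · rw [div_sub_one hβ.ne', div_mul_eq_mul_div, div_le_iff₀ hβ]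
      nlinarith
  · exact ⟨1, zero_le_one, by linarith, .inr (by linarith),
      by rw [hfar h₂, one_smul, sub_sub_cancel]⟩

theorem mul_norm_sub_le (hT : IsIntrepidProj Z β P T) (hP : IsMetricProj Z P)
    (hZ : Convex ℝ Z) (hβ : 0 < β) {ε : ℝ} {y : X} (hy : infDist y Z ≤ β - ε) (x : X) :
    2 * ε * ‖T x - x‖ ≤ ‖x - y‖ ^ 2 - ‖T x - y‖ ^ 2 := by
  obtain ⟨t, ht, -, hshort, hTx⟩ := hT.exists_eq_sub_smul hβ x
  have key := hP.norm_sub_smul_sub_sq_le hZ x hy ht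
  rw [hTx, hP.norm_sub_smul_sub_self ht]
  rcases hshort with rfl | hshort
  · simp only [zero_smul, sub_zero, zero_mul, mul_zero, sub_self, le_refl]
  · nlinarith [mul_nonneg (mul_nonneg ht (infDist_nonneg (x := x) (s := Z))) (sub_nonneg.2 hshort)]

theorem norm_sub_le (hT : IsIntrepidProj Z β P T) (hP : IsMetricProj Z P)
    (hZ : Convex ℝ Z) (hβ : 0 < β) (x : X) {y : X} (hy : y ∈ {w | infDist w Z ≤ β}) :
    ‖T x - y‖ ≤ ‖x - y‖ := by
  have hdec := hT.mul_norm_sub_le hP hZ hβ (ε := 0) (by rwa [sub_zero]) x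
  exact (pow_le_pow_iff_left₀ (norm_nonneg _) (norm_nonneg _) two_ne_zero).1 (by linarith)

theorem infDist_le (hT : IsIntrepidProj Z β P T) (hP : IsMetricProj Z P) (hβ : 0 < β)
    (x : X) : infDist x {w | infDist w Z ≤ β} ≤ ‖T x - x‖ := by
  obtain ⟨t, ht, hlong, -, hTx⟩ := hT.exists_eq_sub_smul hβ x
  rw [hTx, hP.norm_sub_smul_sub_self ht]
  rcases le_or_gt (infDist x Z) β with h | h
  · rw [infDist_zero_of_mem (s := {w | infDist w Z ≤ β}) h]
    exact mul_nonneg ht infDist_nonneg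
  · exact (hP.infDist_enlargement_le hβ h.le).trans hlong

theorem isCycIPStep (hT : IsIntrepidProj Z β P T) (hP : IsMetricProj Z P) (hZ : Convex ℝ Z)
    (hβ : 0 < β) {z : X} (hz : z ∈ interior {w | infDist w Z ≤ β}) :
    IsCycIPStep {w | infDist w Z ≤ β} z T := by
  obtain ⟨ε, hε, hzε⟩ := hP.exists_pos_le_sub_of_mem_interior hZ hβ hz
  exact { mem := interior_subset hz
          norm_sub_le := fun y _ hw => hT.norm_sub_le hP hZ hβ y hw
          infDist_le := ⟨1, fun y => (one_mul ‖T y - y‖).symm ▸ hT.infDist_le hP hβ y⟩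
          decrease := ⟨2 * ε, by positivity, fun y => .inl (hT.mul_norm_sub_le hP hZ hβ hzε y)⟩ }

end IsIntrepidProj

section WeakConvergence

variable [CompleteSpace X]

theorem exists_tendstoWeakly_of_norm_le {α : Type*} (V : Ultrafilter α) {y : α → X} {R : ℝ}
    (hR : ∀ a, ‖y a‖ ≤ R) : ∃ w, TendstoWeakly y V w := by
  -- Banach–Alaoglu in the dual, brought back to `X` by the Riesz representation.
  let φ : α → WeakDual ℝ X := fun a => StrongDual.toWeakDual (InnerProductSpace.toDual ℝ X (y a))
  have hφ : ∀ a, φ a ∈ WeakDual.toStrongDual ⁻¹' closedBall 0 R := fun a => by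
    simpa [φ] using hR a
  obtain ⟨f, -, hf⟩ := (WeakDual.isCompact_closedBall 0 R).ultrafilter_le_nhds (V.map φ)
    (le_principal_iff.2 (Ultrafilter.mem_map.2 (Filter.univ_mem' hφ)))
  refine ⟨(InnerProductSpace.toDual ℝ X).symm (WeakDual.toStrongDual f), fun u => ?_⟩
  rw [InnerProductSpace.toDual_symm_apply]
  exact ((WeakDual.eval_continuous u).tendsto f).comp hf

theorem inner_sub_le_infDist_mul {S : Set X} (hcl : IsClosed S) (hS : Convex ℝ S) {w p : X}
    (hp : p ∈ S) (hwp : dist w p = infDist w S) (v : X) :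
    ⟪v - p, w - p⟫ ≤ infDist v S * ‖w - p‖ := by
  obtain ⟨q, hq, hvq⟩ := exists_dist_eq_infDist_of_convex ⟨p, hp⟩ hcl hS v
  have hqp : ⟪q - p, w - p⟫ ≤ 0 := by
    rw [real_inner_comm]; exact inner_sub_le_zero_of_dist_eq_infDist hS hp hwp hq
  calc ⟪v - p, w - p⟫ = ⟪v - q, w - p⟫ + ⟪q - p, w - p⟫ := by
        rw [← inner_add_left, sub_add_sub_cancel]
    _ ≤ ‖v - q‖ * ‖w - p‖ + 0 := add_le_add (real_inner_le_norm _ _) hqp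
    _ = infDist v S * ‖w - p‖ := by rw [add_zero, ← dist_eq_norm, hvq]

theorem TendstoWeakly.mem_of_tendsto_infDist {α : Type*} {l : Filter α} [l.NeBot] {y : α → X}
    {w : X} (hw : TendstoWeakly y l w) {S : Set X} (hne : S.Nonempty) (hcl : IsClosed S)
    (hS : Convex ℝ S) (hd : Tendsto (fun a => infDist (y a) S) l (𝓝 0)) : w ∈ S := by
  obtain ⟨p, hp, hwp⟩ := exists_dist_eq_infDist_of_convex hne hcl hS w
  have hlim : Tendsto (fun a => ⟪y a - p, w - p⟫) l (𝓝 ⟪w - p, w - p⟫) := by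
    simpa only [inner_sub_left] using (hw (w - p)).sub_const ⟪p, w - p⟫
  have hle : ⟪w - p, w - p⟫ ≤ 0 * ‖w - p‖ := le_of_tendsto_of_tendsto' hlim (hd.mul_const _)
    fun a => inner_sub_le_infDist_mul hcl hS hp hwp (y a)
  rw [zero_mul, real_inner_self_nonpos, sub_eq_zero] at hle
  exact hle ▸ hp

end WeakConvergence

section Fejer

variable {x : ℕ → X}

theorem exists_tendsto_inner_of_antitone {p q : X} (hp : Antitone fun k => ‖x k - p‖)
    (hq : Antitone fun k => ‖x k - q‖) : ∃ l, Tendsto (fun k => ⟪x k, p - q⟫) atTop (𝓝 l) := by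
  obtain ⟨a, ha⟩ : ∃ a, Tendsto (fun k => ‖x k - p‖) atTop (𝓝 a) :=
    ⟨_, tendsto_atTop_ciInf hp ⟨0, by rintro _ ⟨k, rfl⟩; positivity⟩⟩
  obtain ⟨b, hb⟩ : ∃ b, Tendsto (fun k => ‖x k - q‖) atTop (𝓝 b) :=
    ⟨_, tendsto_atTop_ciInf hq ⟨0, by rintro _ ⟨k, rfl⟩; positivity⟩⟩
  have polarization : ∀ k,
      ⟪x k, p - q⟫ = (‖x k - q‖ ^ 2 - ‖x k - p‖ ^ 2 + ‖p‖ ^ 2 - ‖q‖ ^ 2) / 2 := by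
    intro k
    rw [inner_sub_right, norm_sub_sq_real, norm_sub_sq_real]
    ring
  simp_rw [polarization]
  exact ⟨_, ((((hb.pow 2).sub (ha.pow 2)).add_const _).sub_const _).div_const 2⟩

theorem TendstoWeakly.eq_of_antitone {p q : X} (hp : Antitone fun k => ‖x k - p‖)
    (hq : Antitone fun k => ‖x k - q‖) {U V : Filter ℕ} [U.NeBot] [V.NeBot] (hU : U ≤ atTop)
    (hV : V ≤ atTop) (hxp : TendstoWeakly x U p) (hxq : TendstoWeakly x V q) : p = q := by
  obtain ⟨l, hl⟩ := exists_tendsto_inner_of_antitone hp hq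
  have hlp : ⟪p, p - q⟫ = l := tendsto_nhds_unique (hxp _) (hl.mono_left hU)
  have hlq : ⟪q, p - q⟫ = l := tendsto_nhds_unique (hxq _) (hl.mono_left hV)
  rw [← sub_eq_zero, ← inner_self_eq_zero (𝕜 := ℝ), inner_sub_left, hlp, hlq, sub_self]

/-- Opial's lemma. -/
theorem exists_tendstoWeakly_of_antitone [CompleteSpace X] {S : Set X} (hne : S.Nonempty)
    (hfejer : ∀ y ∈ S, Antitone fun k => ‖x k - y‖)
    (hcluster : ∀ (V : Ultrafilter ℕ) (w : X), (V : Filter ℕ) ≤ atTop → TendstoWeakly x V w →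
      w ∈ S) :
    ∃ w ∈ S, TendstoWeakly x atTop w := by
  obtain ⟨y, hy⟩ := hne
  have hlim : ∀ V : Ultrafilter ℕ, ∃ w, TendstoWeakly x V w := fun V =>
    exists_tendstoWeakly_of_norm_le (R := ‖x 0 - y‖ + ‖y‖) V fun k =>
      (norm_le_norm_sub_add (x k) y).trans (by gcongr; exact hfejer y hy (Nat.zero_le k))
  obtain ⟨U, hU⟩ : ∃ U : Ultrafilter ℕ, (U : Filter ℕ) ≤ atTop :=
    ⟨Ultrafilter.of atTop, Ultrafilter.of_le _⟩
  obtain ⟨w, hw⟩ := hlim U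
  have hwS := hcluster U w hU hw
  refine ⟨w, hwS, fun u => (tendsto_iff_ultrafilter _ _ _).2 fun V hV => ?_⟩
  obtain ⟨w', hw'⟩ := hlim V
  rw [hw.eq_of_antitone (hfejer w hwS) (hfejer w' (hcluster V w' hV hw')) hU hV hw']
  exact hw' u

end Fejer

theorem exists_tendstoWeakly_of_quasicyclic [CompleteSpace X] {ι : Type*} [Finite ι]
    {C : ι → Set X} (hcl : ∀ i, IsClosed (C i)) (hconv : ∀ i, Convex ℝ (C i))
    {T : ι → X → X} {z : X} (hT : ∀ i, IsCycIPStep (C i) z (T i))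
    {sel : ℕ → ι} {M : ℕ} (hqc : ∀ k i, ∃ j < M, sel (k + j) = i)
    {x : ℕ → X} (hx : ∀ k, x (k + 1) = T (sel k) (x k)) :
    ∃ w ∈ ⋂ i, C i, TendstoWeakly x atTop w := by
  choose K hK using fun i => (hT i).infDist_le
  choose c hc hdec using fun i => (hT i).decrease
  obtain ⟨c₀, hc₀, hc₀le⟩ := exists_pos_forall_le_of_finite hc
  have hreg : Tendsto (fun k => dist (x k) (x (k + 1))) atTop (𝓝 0) := by
    refine tendsto_zero_of_le_or_sq_le (a := fun k => ‖x k - z‖ ^ 2) (fun k => sq_nonneg _) hc₀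
      (fun k => dist_nonneg) fun k => ?_
    simp only [hx, dist_eq_norm_sub']
    rcases hdec (sel k) (x k) with h | h
    · exact .inl ((mul_le_mul_of_nonneg_right (hc₀le _) (norm_nonneg _)).trans h)
    · exact .inr ((mul_le_mul_of_nonneg_right (hc₀le _) (sq_nonneg _)).trans h)
  have hdist := tendsto_infDist_of_quasicyclic (fun i y => by
    rw [dist_eq_norm_sub']; exact hK i y) hqc hx hreg
  refine exists_tendstoWeakly_of_antitone ⟨z, Set.mem_iInter.2 fun i => (hT i).mem⟩
    (fun w hw => antitone_nat_of_succ_le fun k => ?_) fun V w hV hw =>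
      Set.mem_iInter.2 fun i => hw.mem_of_tendsto_infDist ⟨z, (hT i).mem⟩ (hcl i) (hconv i)
        ((hdist i).mono_left hV)
  rw [hx]
  exact (hT _).norm_sub_le _ w (Set.mem_iInter.1 hw _)

end

theorem cycIP_main_weak_convergence_general
    {X : Type*} [NormedAddCommGroup X] [InnerProductSpace ℝ X] [CompleteSpace X]
    {ι : Type*} [Fintype ι] (I₀ : Set ι)
    (C : ι → Set X)
    (hC : ∀ i, (C i).Nonempty ∧ IsClosed (C i) ∧ Convex ℝ (C i))
    (Z : ι → Set X) (β : ι → ℝ) (PZ : ι → X → X)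
    (hI₀ : ∀ i ∈ I₀, (Z i).Nonempty ∧ IsClosed (Z i) ∧ Convex ℝ (Z i) ∧
      0 < β i ∧ C i = {x : X | Metric.infDist x (Z i) ≤ β i} ∧
      ∀ x : X, PZ i x ∈ Z i ∧ dist x (PZ i x) = Metric.infDist x (Z i))
    (lam : ι → ℝ) (PC : ι → X → X)
    (hI₁ : ∀ i ∉ I₀, lam i ∈ Set.Ioo (0 : ℝ) 2 ∧
      ∀ x : X, PC i x ∈ C i ∧ dist x (PC i x) = Metric.infDist x (C i))
    (T : ι → X → X)
    (hT₀ : ∀ i ∈ I₀, ∀ x : X,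
      (2 * β i ≤ Metric.infDist x (Z i) → T i x = PZ i x) ∧
      (Metric.infDist x (Z i) ≤ β i → T i x = x) ∧
      (β i < Metric.infDist x (Z i) → Metric.infDist x (Z i) < 2 * β i →
        T i x = x + (1 - Metric.infDist x (Z i) / β i) • (x - PZ i x)))
    (hT₁ : ∀ i ∉ I₀, ∀ x : X, T i x = (1 - lam i) • x + lam i • PC i x)
    (hfeas : ((⋂ i ∈ I₀ᶜ, C i) ∩ ⋂ i ∈ I₀, interior (C i)).Nonempty)
    (sel : ℕ → ι)
    (M : ℕ)
    (hqc : ∀ k : ℕ, ∀ i : ι, ∃ j < M, sel (k + j) = i)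
    (x : ℕ → X) (hx : ∀ k : ℕ, x (k + 1) = T (sel k) (x k)) :
    ∃ xbar ∈ ⋂ i, C i, ∀ u : X,
      Filter.Tendsto (fun k => ⟪x k, u⟫) Filter.atTop (nhds ⟪xbar, u⟫) := by
  obtain ⟨z, hz₁, hz₀⟩ := hfeas
  rw [Set.mem_iInter₂] at hz₁ hz₀
  have hstep : ∀ i, IsCycIPStep (C i) z (T i) := fun i => by
    by_cases hi : i ∈ I₀
    · obtain ⟨-, -, hZ, hβ, hCi, hP⟩ := hI₀ i hi
      have hz₀i := hz₀ i hi
      rw [hCi] at hz₀i ⊢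
      exact IsIntrepidProj.isCycIPStep (hT₀ i hi) hP hZ hβ hz₀i
    · obtain ⟨hl, hP⟩ := hI₁ i hi
      exact IsMetricProj.isCycIPStep_relaxed hP (hC i).2.2 hl (hT₁ i hi) (hz₁ i hi)
  exact exists_tendstoWeakly_of_quasicyclic (fun i => (hC i).2.1) (fun i => (hC i).2.2) hstep
    hqc hx

/-- main result: weak convergence.
CycIP setup: `I` finite, partitioned into `I₀` (intrepid projectors onto
enlargements) and `I₁ = I₀ᶜ` (relaxed projectors).  Suppose
`⋂_{i∈I₁} C i ∩ ⋂_{i∈I₀} int (C i) ≠ ∅` and the control is quasicyclic with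
quasiperiod `M ≥ 1`.  Then the generated sequence converges weakly to some
point of `C := ⋂ i, C i`. -/
theorem cycIP_main_weak_convergence
    {X : Type*} [NormedAddCommGroup X] [InnerProductSpace ℝ X] [CompleteSpace X]
    {ι : Type*} [Fintype ι] [Nonempty ι] (I₀ : Set ι)
    (C : ι → Set X)
    (hC : ∀ i, (C i).Nonempty ∧ IsClosed (C i) ∧ Convex ℝ (C i))
    (Z : ι → Set X) (β : ι → ℝ) (PZ : ι → X → X)
    (hI₀ : ∀ i ∈ I₀, (Z i).Nonempty ∧ IsClosed (Z i) ∧ Convex ℝ (Z i) ∧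
      0 < β i ∧ C i = {x : X | Metric.infDist x (Z i) ≤ β i} ∧
      ∀ x : X, PZ i x ∈ Z i ∧ dist x (PZ i x) = Metric.infDist x (Z i))
    (lam : ι → ℝ) (PC : ι → X → X)
    (hI₁ : ∀ i ∉ I₀, lam i ∈ Set.Ioo (0 : ℝ) 2 ∧
      ∀ x : X, PC i x ∈ C i ∧ dist x (PC i x) = Metric.infDist x (C i))
    (T : ι → X → X)
    (hT₀ : ∀ i ∈ I₀, ∀ x : X,
      (2 * β i ≤ Metric.infDist x (Z i) → T i x = PZ i x) ∧
      (Metric.infDist x (Z i) ≤ β i → T i x = x) ∧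
      (β i < Metric.infDist x (Z i) → Metric.infDist x (Z i) < 2 * β i →
        T i x = x + (1 - Metric.infDist x (Z i) / β i) • (x - PZ i x)))
    (hT₁ : ∀ i ∉ I₀, ∀ x : X, T i x = (1 - lam i) • x + lam i • PC i x)
    (hfeas : ((⋂ i ∈ I₀ᶜ, C i) ∩ ⋂ i ∈ I₀, interior (C i)).Nonempty)
    (sel : ℕ → ι) (hsel : ∀ i, {k : ℕ | sel k = i}.Infinite)
    (M : ℕ) (hM : 1 ≤ M)
    (hqc : ∀ k : ℕ, ∀ i : ι, ∃ j < M, sel (k + j) = i)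
    (x : ℕ → X) (hx : ∀ k : ℕ, x (k + 1) = T (sel k) (x k)) :
    ∃ xbar ∈ ⋂ i, C i, ∀ u : X,
      Filter.Tendsto (fun k => ⟪x k, u⟫) Filter.atTop (nhds ⟪xbar, u⟫) :=
  cycIP_main_weak_convergence_general I₀ C hC Z β PZ hI₀ lam PC hI₁ T hT₀ hT₁ hfeas sel M hqc x hx
end

section
/- Let X = ℝⁿ, let C₁ be a nonempty closed convex subset of ℝⁿ, and for each i ∈ {2,…,6} let C_i = (Z_i)_{[β_i]} be the β_i-enlargement of a nonempty closed convex set Z_i ⊆ ℝⁿ with β_i > 0. Set T₁ := P_{C₁} and, for i ∈ {2,…,6}, let T_i be the intrepid projector onto C_i with respect to Z_i and β_i. Suppose the strict feasibility condition C₁ ∩ ⋂_{2≤i≤6} int C_i ≠ ∅ holds. Then for any x₀ ∈ ℝⁿ, the cyclic sequence defined by x_{k+1} := T_{(k mod 6)+1} x_k converges to some point of C := C₁ ∩ C₂ ∩ ⋯ ∩ C₆. -/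
/-!
Every operator of the cycle maps into its constraint set and is quasi-nonexpansive towards it.
For the projection onto `C₁` this is the classical variational inequality; for the intrepid
projector onto `(Z_i)_[β_i]` the same inequality bounds `⟪x - P x, c - P x⟫` by
`d_{Z_i}(x) · d_{Z_i}(c) ≤ d_{Z_i}(x) β_i`, which suffices in both nontrivial branches.

Strict feasibility gives `z ∈ C₁` and `ε > 0` with the closed `ε`-ball around `z` inside every
`C_i`, `i ≥ 2`. Testing quasi-nonexpansiveness at the point of that ball opposite to the step yields
`‖x_{k+1} - z‖² + 2ε‖x_{k+1} - x_k‖ ≤ ‖x_k - z‖²`, while a projection step satisfies the same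
inequality with `‖x_{k+1} - x_k‖²` instead. So `‖x_k - z‖` decreases and the steps tend to `0`.
A cluster point of the bounded sequence is then a limit of points of each closed `C_i`, hence lies
in `C`, and Fejér monotonicity with respect to `C` makes the whole sequence converge to it.
-/

open Filter Metric Set Topology
open scoped RealInnerProductSpace

lemma tendsto_sq_sub_sq_succ_of_antitone {r : ℕ → ℝ} (hr : Antitone r)
    (hb : BddBelow (range r)) : Tendsto (fun k => r k ^ 2 - r (k + 1) ^ 2) atTop (𝓝 0) := by
  have h := (tendsto_atTop_ciInf hr hb).pow 2
  simpa using h.sub (h.comp (tendsto_add_atTop_nat 1))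

lemma tendsto_zero_of_sq_le_or_mul_le {d δ : ℕ → ℝ} {ε : ℝ} (hd : ∀ k, 0 ≤ d k) (hε : 0 < ε)
    (hδ : Tendsto δ atTop (𝓝 0)) (h : ∀ k, d k ^ 2 ≤ δ k ∨ ε * d k ≤ δ k) :
    Tendsto d atTop (𝓝 0) := by
  have hbound : ∀ k, d k ≤ √(δ k) + δ k / ε := fun k => by
    rcases h k with h | h
    · have : 0 ≤ δ k / ε := div_nonneg ((sq_nonneg _).trans h) hε.le
      have : d k ≤ √(δ k) := (le_abs_self _).trans (Real.abs_le_sqrt h)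
      linarith
    · have : d k ≤ δ k / ε := by rw [le_div_iff₀ hε]; linarith
      linarith [Real.sqrt_nonneg (δ k)]
  refine squeeze_zero hd hbound ?_
  simpa using hδ.sqrt.add (hδ.div_const ε)

section PseudoMetricSpace

variable {X : Type*} [PseudoMetricSpace X]

lemma tendsto_dist_add_of_tendsto_dist_succ {x : ℕ → X}
    (h : Tendsto (fun k => dist (x (k + 1)) (x k)) atTop (𝓝 0)) (s : ℕ) :
    Tendsto (fun k => dist (x (k + s)) (x k)) atTop (𝓝 0) := by
  induction s with
  | zero => simp
  | succ s ih =>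
    refine squeeze_zero (fun _ => dist_nonneg) (fun k => dist_triangle _ (x (k + s)) _) ?_
    simpa [← add_assoc] using (h.comp (tendsto_add_atTop_nat s)).add ih

lemma mem_of_tendsto_subseq_of_cyclic {m : ℕ} [NeZero m] {C : Fin m → Set X}
    (hC : ∀ i, IsClosed (C i)) {x : ℕ → X} (hxC : ∀ k, x (k + 1) ∈ C (Fin.ofNat m k))
    (h : Tendsto (fun k => dist (x (k + 1)) (x k)) atTop (𝓝 0))
    {φ : ℕ → ℕ} (hφ : Tendsto φ atTop atTop) {a : X} (ha : Tendsto (x ∘ φ) atTop (𝓝 a))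
    (i : Fin m) : a ∈ C i := by
  -- from `x k` the iteration enters `C i` within `m` steps, and those steps vanish
  set s : ℕ → Fin m := fun k => i - Fin.ofNat m k
  have hs : ∀ k, x (k + (s k + 1)) ∈ C i := fun k => by
    have hk : Fin.ofNat m (k + s k) = i := by rw [← Fin.ofNat_add, add_sub_cancel]
    simpa only [← add_assoc, hk] using hxC (k + s k)
  set D : ℕ → ℝ := fun k => ∑ t ∈ Finset.range (m + 1), dist (x (k + t)) (x k)
  have hD : Tendsto D atTop (𝓝 0) := by
    simpa using tendsto_finsetSum _ fun t _ => tendsto_dist_add_of_tendsto_dist_succ h t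
  have hle : ∀ k, dist (x (k + (s k + 1))) (x k) ≤ D k := fun k =>
    Finset.single_le_sum (f := fun t => dist (x (k + t)) (x k)) (fun _ _ => dist_nonneg)
      (Finset.mem_range.2 (Nat.succ_lt_succ (s k).isLt))
  have hy : Tendsto (fun j => x (φ j + (s (φ j) + 1))) atTop (𝓝 a) := by
    rw [tendsto_iff_dist_tendsto_zero]
    refine squeeze_zero (g := fun j => D (φ j) + dist (x (φ j)) a) (fun _ => dist_nonneg)
      (fun j => (dist_triangle _ (x (φ j)) a).trans (by gcongr; exact hle (φ j))) ?_
    simpa using (hD.comp hφ).add (tendsto_iff_dist_tendsto_zero.1 ha)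
  exact (hC i).mem_of_tendsto hy (Eventually.of_forall fun j => hs (φ j))

lemma tendsto_of_antitone_dist_of_tendsto_subseq {x : ℕ → X} {a : X}
    (hx : Antitone fun k => dist (x k) a) {φ : ℕ → ℕ} (hφ : Tendsto φ atTop atTop)
    (ha : Tendsto (x ∘ φ) atTop (𝓝 a)) : Tendsto x atTop (𝓝 a) := by
  rw [tendsto_iff_dist_tendsto_zero] at ha ⊢
  exact (tendsto_iff_tendsto_subseq_of_antitone hx hφ).2 ha

end PseudoMetricSpace

variable {E : Type*} [NormedAddCommGroup E] [InnerProductSpace ℝ E]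

lemma two_mul_dist_add_sq_dist_le {w y z : E} {ε : ℝ} (hε : 0 ≤ ε)
    (h : ∀ c ∈ closedBall z ε, dist w c ≤ dist y c) :
    2 * ε * dist w y + dist w z ^ 2 ≤ dist y z ^ 2 := by
  rcases eq_or_ne y w with rfl | hne
  · simp
  have hyw : ‖y - w‖ ≠ 0 := norm_ne_zero_iff.2 (sub_ne_zero.2 hne)
  -- test `h` at the point of the sphere reached from `z` in the direction `y - w`
  set u : E := (ε / ‖y - w‖) • (y - w)
  have hu : ‖u‖ = ε := by
    rw [norm_smul, Real.norm_of_nonneg (by positivity), div_mul_cancel₀ _ hyw]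
  have hinner : ⟪y - z, u⟫ - ⟪w - z, u⟫ = ε * ‖y - w‖ := by
    rw [← inner_sub_left, sub_sub_sub_cancel_right, real_inner_smul_right,
      real_inner_self_eq_norm_sq]
    field_simp
  have hc := pow_le_pow_left₀ dist_nonneg (h (z + u) (by simp [dist_eq_norm, hu])) 2
  have hexp : ∀ v : E, dist v (z + u) ^ 2 = dist v z ^ 2 - 2 * ⟪v - z, u⟫ + ‖u‖ ^ 2 := fun v => by
    rw [dist_eq_norm, dist_eq_norm, sub_add_eq_sub_sub, norm_sub_sq_real]
  rw [hexp, hexp] at hc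
  rw [dist_comm w y, dist_eq_norm y w]
  linarith

section Projection

variable {K : Set E} {x p : E}

lemma inner_sub_le_zero_of_dist_eq_infDist_s16 (hK : Convex ℝ K) (hp : p ∈ K)
    (hd : dist x p = infDist x K) {w : E} (hw : w ∈ K) : ⟪x - p, w - p⟫ ≤ 0 := by
  refine (norm_eq_iInf_iff_real_inner_le_zero hK hp).1 ?_ w hw
  rw [← dist_eq_norm, hd, infDist_eq_iInf]
  exact iInf_congr fun y => dist_eq_norm _ _

lemma sq_dist_add_sq_dist_le_of_dist_eq_infDist (hK : Convex ℝ K) (hp : p ∈ K)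
    (hd : dist x p = infDist x K) {c : E} (hc : c ∈ K) :
    dist p x ^ 2 + dist p c ^ 2 ≤ dist x c ^ 2 := by
  have h := inner_sub_le_zero_of_dist_eq_infDist_s16 hK hp hd hc
  rw [dist_eq_norm, dist_eq_norm, dist_eq_norm, norm_sub_rev p x,
    ← sub_add_sub_cancel x p c, norm_add_sq_real, ← neg_sub c p, inner_neg_right]
  linarith

lemma inner_sub_le_dist_mul_infDist (hK : Convex ℝ K) (hp : p ∈ K)
    (hd : dist x p = infDist x K) (c : E) : ⟪x - p, c - p⟫ ≤ dist x p * infDist c K := by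
  rcases (dist_nonneg (x := x) (y := p)).eq_or_lt with h0 | hpos
  · rw [← h0, zero_mul, dist_eq_zero.1 h0.symm, sub_self, inner_zero_left]
  rw [mul_comm, ← div_le_iff₀ hpos]
  refine (le_infDist ⟨p, hp⟩).2 fun q hq => ?_
  rw [div_le_iff₀ hpos, ← sub_add_sub_cancel c q p, inner_add_right, dist_eq_norm x p,
    dist_eq_norm c q, mul_comm]
  linarith [real_inner_le_norm (x - p) (c - q), inner_sub_le_zero_of_dist_eq_infDist_s16 hK hp hd hq]

lemma dist_le_of_two_mul_infDist_le (hK : Convex ℝ K) (hp : p ∈ K)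
    (hd : dist x p = infDist x K) {c : E} (hc : 2 * infDist c K ≤ dist x p) :
    dist p c ≤ dist x c := by
  have h := inner_sub_le_dist_mul_infDist hK hp hd c
  refine (pow_le_pow_iff_left₀ dist_nonneg dist_nonneg two_ne_zero).1 ?_
  rw [dist_eq_norm, dist_eq_norm, ← sub_add_sub_cancel x p c, norm_add_sq_real,
    ← neg_sub c p, inner_neg_right, ← dist_eq_norm]
  nlinarith [dist_nonneg (x := x) (y := p)]

lemma dist_le_of_dist_eq_infDist (hK : Convex ℝ K) (hp : p ∈ K)
    (hd : dist x p = infDist x K) {c : E} (hc : c ∈ K) : dist p c ≤ dist x c :=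
  dist_le_of_two_mul_infDist_le hK hp hd (by simp [infDist_zero_of_mem hc])

lemma dist_add_smul_sub_le {c : E} {β : ℝ} (hK : Convex ℝ K) (hp : p ∈ K)
    (hd : dist x p = infDist x K) (hc : infDist c K ≤ β) (hβ : 0 < β) (hβd : β ≤ dist x p)
    (hdβ : dist x p ≤ 2 * β) :
    dist (x + (1 - dist x p / β) • (x - p)) c ≤ dist x c := by
  set d := dist x p
  set l := 1 - d / β
  have hd0 : 0 ≤ d := dist_nonneg
  have hl : l * β = β - d := by simp only [l]; field_simp
  have hl0 : l ≤ 0 := by simp only [l]; rw [sub_nonpos, le_div_iff₀ hβ]; linarith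
  have hJ : ⟪x - p, c - p⟫ ≤ d * β :=
    (inner_sub_le_dist_mul_infDist hK hp hd c).trans (mul_le_mul_of_nonneg_left hc hd0)
  have hinner : ⟪x - c, x - p⟫ = d ^ 2 - ⟪x - p, c - p⟫ := by
    rw [← sub_sub_sub_cancel_right x c p, inner_sub_left, real_inner_self_eq_norm_sq,
      real_inner_comm, ← dist_eq_norm]
  have hexp : dist (x + l • (x - p)) c ^ 2
      = dist x c ^ 2 + 2 * l * (d ^ 2 - ⟪x - p, c - p⟫) + l ^ 2 * d ^ 2 := by
    rw [dist_eq_norm, add_sub_right_comm, norm_add_sq_real, real_inner_smul_right, hinner,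
      norm_smul, mul_pow, Real.norm_eq_abs, sq_abs, ← dist_eq_norm, ← dist_eq_norm]
    ring
  -- as `l ≤ 0` and `d - β = -l β`, the cross term is at most `-2 l² d β`, and `l² d (d - 2β) ≤ 0`
  have hcross : l * d * (d - β) = -(l ^ 2 * d * β) := by linear_combination (l * d) * hl
  refine (pow_le_pow_iff_left₀ dist_nonneg dist_nonneg two_ne_zero).1 ?_
  linarith [mul_le_mul_of_nonpos_left hJ hl0,
    mul_nonneg (sq_nonneg l) (mul_nonneg hd0 (sub_nonneg.2 hdβ))]

lemma infDist_add_smul_sub_le {β : ℝ} (hp : p ∈ K) (hβ : 0 < β)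
    (hdβ : dist x p ≤ 2 * β) : infDist (x + (1 - dist x p / β) • (x - p)) K ≤ β := by
  set d := dist x p
  have ht : 0 ≤ 2 - d / β := by rw [sub_nonneg, div_le_iff₀ hβ]; linarith
  have hQ : dist (x + (1 - d / β) • (x - p)) p = (2 - d / β) * d := by
    rw [dist_eq_norm, show x + (1 - d / β) • (x - p) - p = (2 - d / β) • (x - p) by module,
      norm_smul, Real.norm_of_nonneg ht, ← dist_eq_norm]
  refine (infDist_le_dist_of_mem hp).trans (hQ.trans_le ?_)
  rw [sub_mul, div_mul_eq_mul_div, sub_le_iff_le_add, ← sub_le_iff_le_add', le_div_iff₀ hβ]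
  linarith [sq_nonneg (d - β)]

end Projection

-- `P` stands for a metric projection onto `S`.
noncomputable def intrepidProj (S : Set E) (P : E → E) (β : ℝ) (x : E) : E :=
  if infDist x S ≤ β then x
  else if infDist x S < 2 * β then x + (1 - infDist x S / β) • (x - P x)
  else P x

section Intrepid

variable {S : Set E} {P : E → E} {β : ℝ}

lemma intrepidProj_eq_of {T : E → E} (hT : ∀ x, (2 * β ≤ infDist x S → T x = P x) ∧
      (infDist x S ≤ β → T x = x) ∧
      (β < infDist x S → infDist x S < 2 * β →
        T x = x + (1 - infDist x S / β) • (x - P x))) :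
    T = intrepidProj S P β := by
  funext x
  obtain ⟨hfar, hnear, hmid⟩ := hT x
  unfold intrepidProj
  split_ifs with h₁ h₂
  · exact hnear h₁
  · exact hmid (not_le.1 h₁) h₂
  · exact hfar (not_lt.1 h₂)

lemma infDist_intrepidProj_le (hP : ∀ x, P x ∈ S ∧ dist x (P x) = infDist x S) (hβ : 0 ≤ β)
    (x : E) : infDist (intrepidProj S P β x) S ≤ β := by
  obtain ⟨hPx, hd⟩ := hP x
  unfold intrepidProj
  split_ifs with h₁ h₂
  · exact h₁
  · rw [← hd] at h₂ ⊢
    exact infDist_add_smul_sub_le hPx (by linarith) h₂.le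
  · rwa [infDist_zero_of_mem hPx]

lemma dist_intrepidProj_le (hP : ∀ x, P x ∈ S ∧ dist x (P x) = infDist x S)
    (hS : Convex ℝ S) {c : E} (hc : infDist c S ≤ β) (x : E) :
    dist (intrepidProj S P β x) c ≤ dist x c := by
  obtain ⟨hPx, hd⟩ := hP x
  unfold intrepidProj
  split_ifs with h₁ h₂
  · exact le_rfl
  · rw [← hd] at h₁ h₂ ⊢
    exact dist_add_smul_sub_le hS hPx hd hc (by linarith) (not_le.1 h₁).le h₂.le
  · rw [← hd, not_lt] at h₂
    exact dist_le_of_two_mul_infDist_le hS hPx hd (by linarith)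

end Intrepid

theorem exists_tendsto_cyclic_iterate [ProperSpace E] {m : ℕ} [NeZero m]
    {C : Fin m → Set E} {T : Fin m → E → E} (hC : ∀ i, IsClosed (C i))
    (hTC : ∀ i y, T i y ∈ C i) (hT : ∀ i y, ∀ c ∈ C i, dist (T i y) c ≤ dist y c)
    {z : E} {ε : ℝ} (hε : 0 < ε)
    (hz : ∀ i, (∀ y, dist (T i y) y ^ 2 + dist (T i y) z ^ 2 ≤ dist y z ^ 2) ∨
      closedBall z ε ⊆ C i)
    {x : ℕ → E} (hx : ∀ k, x (k + 1) = T (Fin.ofNat m k) (x k)) :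
    ∃ a ∈ ⋂ i, C i, Tendsto x atTop (𝓝 a) := by
  set r : ℕ → ℝ := fun k => dist (x k) z
  have hstep : ∀ k, dist (x (k + 1)) (x k) ^ 2 ≤ r k ^ 2 - r (k + 1) ^ 2 ∨
      2 * ε * dist (x (k + 1)) (x k) ≤ r k ^ 2 - r (k + 1) ^ 2 := fun k => by
    rcases hz (Fin.ofNat m k) with hfirm | hball
    · left
      linarith [hx k ▸ hfirm (x k)]
    · right
      linarith [hx k ▸ two_mul_dist_add_sq_dist_le hε.le fun c hc => hT _ (x k) c (hball hc)]
  have hr : Antitone r := antitone_nat_of_succ_le fun k => by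
    refine (pow_le_pow_iff_left₀ dist_nonneg dist_nonneg two_ne_zero).1 ?_
    rcases hstep k with h | h <;> nlinarith [dist_nonneg (x := x (k + 1)) (y := x k)]
  have hsteps : Tendsto (fun k => dist (x (k + 1)) (x k)) atTop (𝓝 0) :=
    tendsto_zero_of_sq_le_or_mul_le (fun _ => dist_nonneg) (by positivity)
      (tendsto_sq_sub_sq_succ_of_antitone hr ⟨0, by rintro - ⟨k, rfl⟩; exact dist_nonneg⟩) hstep
  obtain ⟨a, -, φ, hφ, ha⟩ := tendsto_subseq_of_bounded (isBounded_closedBall (x := z))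
    fun k => mem_closedBall.2 (hr (Nat.zero_le k))
  have haC : ∀ i, a ∈ C i := mem_of_tendsto_subseq_of_cyclic hC (fun k => hx k ▸ hTC _ _) hsteps
    hφ.tendsto_atTop ha
  refine ⟨a, mem_iInter.2 haC, tendsto_of_antitone_dist_of_tendsto_subseq ?_ hφ.tendsto_atTop ha⟩
  exact antitone_nat_of_succ_le fun k => hx k ▸ hT _ _ _ (haC _)

/-- CycIP for the road design problem, strict feasibility.
In `X = ℝⁿ`, let `C 0` be a nonempty closed convex set (interpolation
constraints) with `T 0 := P_{C 0}`, and for `i ≠ 0` let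
`C i = (Z i)_[β i]` be an enlargement with `T i` the corresponding intrepid
projector.  If `C 0 ∩ ⋂_{i ≠ 0} int (C i) ≠ ∅`, then from any starting point
the cyclic sequence `x (k+1) = T (k mod 6) (x k)` converges to some point of
`C := ⋂ i, C i`. -/
theorem cycIP_road_design_convergence
    {n : ℕ}
    (C : Fin 6 → Set (EuclideanSpace ℝ (Fin n)))
    (hC0 : (C 0).Nonempty ∧ IsClosed (C 0) ∧ Convex ℝ (C 0))
    (P0 : EuclideanSpace ℝ (Fin n) → EuclideanSpace ℝ (Fin n))
    (hP0 : ∀ x : EuclideanSpace ℝ (Fin n),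
      P0 x ∈ C 0 ∧ dist x (P0 x) = Metric.infDist x (C 0))
    (Z : Fin 6 → Set (EuclideanSpace ℝ (Fin n))) (β : Fin 6 → ℝ)
    (PZ : Fin 6 → EuclideanSpace ℝ (Fin n) → EuclideanSpace ℝ (Fin n))
    (hZ : ∀ i ≠ (0 : Fin 6), (Z i).Nonempty ∧ IsClosed (Z i) ∧ Convex ℝ (Z i) ∧
      0 < β i ∧ C i = {x : EuclideanSpace ℝ (Fin n) | Metric.infDist x (Z i) ≤ β i} ∧
      ∀ x : EuclideanSpace ℝ (Fin n),
        PZ i x ∈ Z i ∧ dist x (PZ i x) = Metric.infDist x (Z i))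
    (T : Fin 6 → EuclideanSpace ℝ (Fin n) → EuclideanSpace ℝ (Fin n))
    (hT0 : ∀ x : EuclideanSpace ℝ (Fin n), T 0 x = P0 x)
    (hTi : ∀ i ≠ (0 : Fin 6), ∀ x : EuclideanSpace ℝ (Fin n),
      (2 * β i ≤ Metric.infDist x (Z i) → T i x = PZ i x) ∧
      (Metric.infDist x (Z i) ≤ β i → T i x = x) ∧
      (β i < Metric.infDist x (Z i) → Metric.infDist x (Z i) < 2 * β i →
        T i x = x + (1 - Metric.infDist x (Z i) / β i) • (x - PZ i x)))
    (hfeas : (C 0 ∩ ⋂ i ∈ ({0}ᶜ : Set (Fin 6)), interior (C i)).Nonempty)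
    (x : ℕ → EuclideanSpace ℝ (Fin n))
    (hx : ∀ k : ℕ, x (k + 1) = T (Fin.ofNat 6 k) (x k)) :
    ∃ xbar ∈ ⋂ i, C i, Filter.Tendsto x Filter.atTop (nhds xbar) := by
  obtain ⟨-, hC0closed, hC0convex⟩ := hC0
  obtain ⟨z, hz0, hz⟩ := hfeas
  obtain ⟨ε, hε, hball⟩ := nhds_basis_closedBall.mem_iff.1 <|
    (biInter_mem (toFinite _)).2 fun i hi => mem_interior_iff_mem_nhds.1 (mem_iInter₂.1 hz i hi)
  refine exists_tendsto_cyclic_iterate (z := z) (fun i => ?closed) (fun i y => ?maps)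
    (fun i y c hc => ?quasi) hε (fun i => ?firm_or_ball) hx
  case closed =>
    rcases eq_or_ne i 0 with rfl | hi
    · exact hC0closed
    · rw [(hZ i hi).2.2.2.2.1]
      exact isClosed_le (continuous_infDist_pt _) continuous_const
  case maps =>
    rcases eq_or_ne i 0 with rfl | hi
    · exact hT0 y ▸ (hP0 y).1
    · obtain ⟨-, -, -, hβ, hCi, hPZ⟩ := hZ i hi
      rw [hCi, intrepidProj_eq_of (hTi i hi)]
      exact infDist_intrepidProj_le hPZ hβ.le y
  case quasi =>
    rcases eq_or_ne i 0 with rfl | hi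
    · exact hT0 y ▸ dist_le_of_dist_eq_infDist hC0convex (hP0 y).1 (hP0 y).2 hc
    · obtain ⟨-, -, hconv, -, hCi, hPZ⟩ := hZ i hi
      rw [intrepidProj_eq_of (hTi i hi)]
      exact dist_intrepidProj_le hPZ hconv (by rwa [hCi] at hc) y
  case firm_or_ball =>
    rcases eq_or_ne i 0 with rfl | hi
    · exact .inl fun y => hT0 y ▸
        sq_dist_add_sq_dist_le_of_dist_eq_infDist hC0convex (hP0 y).1 (hP0 y).2 hz0
    · exact .inr (hball.trans (biInter_subset_of_mem hi))
end
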